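/- arXiv:1808.03086 — 7 statements merged into one kernel-verified Lean document; each statement's English description precedes it below -/
import Mathlib

section
/- Euler's identity: for 0 < q < 1 and any complex number t, the infinite product ∏_{j=0}^∞ (1 + q^j t) equals the sum ∑_{j=0}^∞ q^{j(j-1)/2} t^j / (q;q)_j, where (q;q)_j = ∏_{s=1}^j (1 - q^s). -/
/-!
Write `F(t) = ∑ E_j(t)` for Euler's series. The recurrence `E_{j+1}(t) = E_{j+1}(q t) + t E_j(q t)`
gives the functional equation `F(t) = (1 + t) F(q t)`, hence
`F(t) = ∏_{j < n} (1 + q^j t) · F(q^n t)` for every `n`. As `n → ∞` the last factor tends to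
`F(0) = 1` by dominated convergence (the terms of `F(q^n t)` are those of `F(t)` multiplied by
`(q^n)^j`), while the partial products tend to the infinite product.
-/

open Filter Finset Topology

section EulerIdentity

variable {𝕜 : Type*} [NormedField 𝕜] {q : 𝕜}

noncomputable def eulerTerm (q t : 𝕜) (j : ℕ) : 𝕜 :=
  q ^ (j * (j - 1) / 2) * t ^ j / ∏ s ∈ range j, (1 - q ^ (s + 1))

@[simp]
lemma eulerTerm_zero (q t : 𝕜) : eulerTerm q t 0 = 1 := by
  simp [eulerTerm]

lemma eulerTerm_mul_left (q c t : 𝕜) (j : ℕ) : eulerTerm q (c * t) j = c ^ j * eulerTerm q t j := by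
  rw [eulerTerm, eulerTerm, mul_pow]
  ring

lemma one_sub_pow_succ_ne_zero (hq : ‖q‖ < 1) (s : ℕ) : 1 - q ^ (s + 1) ≠ 0 := by
  have hlt : ‖q ^ (s + 1)‖ < 1 := norm_pow q (s + 1) ▸ pow_lt_one₀ (norm_nonneg q) hq s.succ_ne_zero
  refine sub_ne_zero.mpr fun h => ?_
  simp [← h] at hlt

lemma eulerTerm_succ (hq : ‖q‖ < 1) (t : 𝕜) (j : ℕ) :
    eulerTerm q t (j + 1) = eulerTerm q t j * (q ^ j * t / (1 - q ^ (j + 1))) := by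
  have := one_sub_pow_succ_ne_zero hq j
  rw [eulerTerm, eulerTerm, Nat.triangle_succ, pow_add, prod_range_succ, pow_succ]
  field_simp

lemma eulerTerm_succ_eq_add (hq : ‖q‖ < 1) (t : 𝕜) (j : ℕ) :
    eulerTerm q t (j + 1) = eulerTerm q (q * t) (j + 1) + t * eulerTerm q (q * t) j := by
  have := one_sub_pow_succ_ne_zero hq j
  rw [eulerTerm_mul_left, eulerTerm_mul_left, eulerTerm_succ hq]
  field_simp
  ring

lemma summable_norm_eulerTerm (hq : ‖q‖ < 1) (t : 𝕜) : Summable fun j => ‖eulerTerm q t j‖ := by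
  have hpow := tendsto_pow_atTop_nhds_zero_of_norm_lt_one hq
  have hnum : Tendsto (fun j : ℕ => q ^ j * t) atTop (𝓝 0) := by simpa using hpow.mul_const t
  have hden : Tendsto (fun j : ℕ => 1 - q ^ (j + 1)) atTop (𝓝 1) := by
    simpa using tendsto_const_nhds.sub (hpow.comp (tendsto_add_atTop_nat 1))
  have hratio : Tendsto (fun j : ℕ => q ^ j * t / (1 - q ^ (j + 1))) atTop (𝓝 0) :=
    zero_div (1 : 𝕜) ▸ hnum.div hden one_ne_zero
  refine summable_of_ratio_norm_eventually_le (r := 1 / 2) (by norm_num) ?_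
  filter_upwards [hratio.norm.eventually_le_const (by simp : ‖(0 : 𝕜)‖ < 1 / 2)] with j hj
  rw [norm_norm, norm_norm, eulerTerm_succ hq, norm_mul, mul_comm]
  gcongr

variable [CompleteSpace 𝕜]

lemma summable_eulerTerm (hq : ‖q‖ < 1) (t : 𝕜) : Summable (eulerTerm q t) :=
  (summable_norm_eulerTerm hq t).of_norm

lemma tsum_eulerTerm_eq_one_add_mul (hq : ‖q‖ < 1) (t : 𝕜) :
    ∑' j, eulerTerm q t j = (1 + t) * ∑' j, eulerTerm q (q * t) j := by
  have hs := summable_eulerTerm hq t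
  have hs' := summable_eulerTerm hq (q * t)
  rw [hs.tsum_eq_zero_add, tsum_congr (eulerTerm_succ_eq_add hq t),
    ((summable_nat_add_iff 1).2 hs').tsum_add (hs'.mul_left t), tsum_mul_left,
    hs'.tsum_eq_zero_add, eulerTerm_zero, eulerTerm_zero]
  ring

lemma tsum_eulerTerm_eq_prod_mul (hq : ‖q‖ < 1) (t : 𝕜) (n : ℕ) :
    ∑' j, eulerTerm q t j = (∏ j ∈ range n, (1 + q ^ j * t)) * ∑' j, eulerTerm q (q ^ n * t) j := by
  induction n with
  | zero => simp
  | succ n ih =>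
    rw [ih, tsum_eulerTerm_eq_one_add_mul hq (q ^ n * t), prod_range_succ, ← mul_assoc q, ← pow_succ']
    ring

lemma tendsto_tsum_eulerTerm_pow_mul (hq : ‖q‖ < 1) (t : 𝕜) :
    Tendsto (fun n : ℕ => ∑' j, eulerTerm q (q ^ n * t) j) atTop (𝓝 1) := by
  have hpow := tendsto_pow_atTop_nhds_zero_of_norm_lt_one hq
  have hlimit : ∑' j, (0 : 𝕜) ^ j * eulerTerm q t j = 1 := by
    rw [tsum_eq_single 0 fun j hj => by simp [hj]]
    simp
  simp only [eulerTerm_mul_left]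
  refine hlimit ▸ tendsto_tsum_of_dominated_convergence (summable_norm_eulerTerm hq t)
    (fun j => (hpow.pow j).mul_const _) (Eventually.of_forall fun n j => ?_)
  rw [norm_mul, norm_pow, norm_pow]
  exact mul_le_of_le_one_left (norm_nonneg _) (pow_le_one₀ (by positivity)
    (pow_le_one₀ (norm_nonneg q) hq.le))

lemma multipliable_one_add_pow_mul (hq : ‖q‖ < 1) (t : 𝕜) :
    Multipliable fun j : ℕ => 1 + q ^ j * t :=
  multipliable_one_add_of_summable <| by
    simpa [norm_mul, norm_pow] using (summable_geometric_of_lt_one (norm_nonneg q) hq).mul_right ‖t‖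

lemma tprod_one_add_pow_mul_eq_tsum_eulerTerm (hq : ‖q‖ < 1) (t : 𝕜) :
    ∏' j : ℕ, (1 + q ^ j * t) = ∑' j, eulerTerm q t j := by
  have hprod := (multipliable_one_add_pow_mul hq t).hasProd.tendsto_prod_nat
  have hlim := mul_one (∏' j : ℕ, (1 + q ^ j * t)) ▸ hprod.mul (tendsto_tsum_eulerTerm_pow_mul hq t)
  refine tendsto_nhds_unique hlim ?_
  simpa only [← tsum_eulerTerm_eq_prod_mul hq] using tendsto_const_nhds

end EulerIdentity

/-- Euler's identity: for `0 < q < 1` and any complex `t`,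
`∏_{j=0}^∞ (1 + q^j t) = ∑_{j=0}^∞ q^{j(j-1)/2} t^j / (q;q)_j`,
where `(q;q)_j = ∏_{s=1}^j (1 - q^s)`.  Both sides converge absolutely. -/
theorem euler_identity (q : ℝ) (hq0 : 0 < q) (hq1 : q < 1) (t : ℂ) :
    Multipliable (fun j : ℕ => (1 + (q : ℂ) ^ j * t)) ∧
    Summable (fun j : ℕ =>
      (q : ℂ) ^ (j * (j - 1) / 2) * t ^ j / (∏ s ∈ Finset.range j, (1 - (q : ℂ) ^ (s + 1)))) ∧
    (∏' j : ℕ, (1 + (q : ℂ) ^ j * t)) =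
      ∑' j : ℕ,
        (q : ℂ) ^ (j * (j - 1) / 2) * t ^ j / (∏ s ∈ Finset.range j, (1 - (q : ℂ) ^ (s + 1))) := by
  have hq : ‖(q : ℂ)‖ < 1 := by
    rwa [Complex.norm_real, Real.norm_of_nonneg hq0.le]
  exact ⟨multipliable_one_add_pow_mul hq t, summable_eulerTerm hq t,
    tprod_one_add_pow_mul_eq_tsum_eulerTerm hq t⟩
end

section
/- Let a > 1 and let (c_j) be a real sequence with c_j = o(a^{-j(j-1)/2}) as j → ∞. Then the entire function φ(z) = ∑_{j=0}^∞ c_j z^j satisfies M(r;φ) = o( exp( (ln r)²/(2 ln a) + (ln r)/2 ) ) as r → ∞, where M(r;φ) = max_{|z|=r} |φ(z)|. -/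
/-!
Completing the square gives `a^{-j(j-1)/2} r^j = e^{(ln a)/8} e^{-(ln a/2)(j - x)^2} E(r)`, where
`E(r) = exp((ln r)^2/(2 ln a) + (ln r)/2)` and `x = ln r / ln a + 1/2`. The Gaussian lattice sums
`∑_j e^{-(ln a/2)(j - x)^2}` are bounded uniformly in `x`, so the majorant series
`∑ a^{-j(j-1)/2} r^j` is `O(E(r))`. Since `c_j` is eventually at most `ε a^{-j(j-1)/2}`, the
series `∑ |c_j| r^j` is at most a polynomial in `r` plus `ε` times the majorant, and every
polynomial is `o(E(r))`.
-/

open Filter Asymptotics Real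

lemma summable_pow_natAbs {q : ℝ} (hq0 : 0 ≤ q) (hq1 : q < 1) :
    Summable fun k : ℤ => q ^ k.natAbs :=
  .of_nat_of_neg (by simpa using summable_geometric_of_lt_one hq0 hq1)
    (by simpa using summable_geometric_of_lt_one hq0 hq1)

lemma exp_neg_mul_sq_le_pow_natAbs {L y : ℝ} (hL : 0 ≤ L) {k : ℤ} (hk : |y - k| ≤ 1) :
    exp (-(L / 2) * y ^ 2) ≤ exp L * exp (-(L / 2)) ^ k.natAbs := by
  have hyk : |(k : ℝ)| - 1 ≤ |y| := by linarith [abs_sub_abs_le_abs_sub (k : ℝ) y, abs_sub_comm y k]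
  have hy : |y| - 1 ≤ y ^ 2 := by nlinarith [sq_abs y, sq_nonneg (|y| - 1 / 2)]
  rw [← exp_nat_mul, ← exp_add, Nat.cast_natAbs, Int.cast_abs]
  exact exp_le_exp.mpr (by nlinarith [mul_nonneg hL (by linarith : 0 ≤ y ^ 2 - |(k : ℝ)| + 2)])

section GaussianLatticeSum

variable {L : ℝ} (hL : 0 < L) (x : ℝ)
include hL

lemma exp_neg_mul_sq_sub_le (j : ℕ) :
    exp (-(L / 2) * (j - x) ^ 2) ≤ exp L * exp (-(L / 2)) ^ ((j : ℤ) - ⌈x⌉).natAbs :=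
  exp_neg_mul_sq_le_pow_natAbs hL.le <| by
    push_cast
    rw [abs_le]
    constructor <;> linarith [Int.le_ceil x, Int.ceil_lt_add_one x]

lemma summable_exp_neg_mul_sq_sub : Summable fun j : ℕ => exp (-(L / 2) * (j - x) ^ 2) :=
  .of_nonneg_of_le (fun _ => (exp_pos _).le) (exp_neg_mul_sq_sub_le hL x)
    (((summable_pow_natAbs (exp_pos _).le (exp_lt_one_iff.mpr (by linarith))).mul_left
      (exp L)).comp_injective (sub_left_injective.comp Nat.cast_injective))

lemma tsum_exp_neg_mul_sq_sub_le :
    ∑' j : ℕ, exp (-(L / 2) * (j - x) ^ 2) ≤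
      exp L * ∑' k : ℤ, exp (-(L / 2)) ^ k.natAbs := by
  have hq := summable_pow_natAbs (exp_pos (-(L / 2))).le (exp_lt_one_iff.mpr (by linarith))
  calc ∑' j : ℕ, exp (-(L / 2) * (j - x) ^ 2)
      ≤ ∑' j : ℕ, exp L * exp (-(L / 2)) ^ ((j : ℤ) - ⌈x⌉).natAbs :=
        (summable_exp_neg_mul_sq_sub hL x).tsum_le_tsum (exp_neg_mul_sq_sub_le hL x)
          ((hq.mul_left (exp L)).comp_injective (sub_left_injective.comp Nat.cast_injective))
    _ ≤ ∑' k : ℤ, exp L * exp (-(L / 2)) ^ k.natAbs :=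
        tsum_comp_le_tsum_of_inj (hq.mul_left (exp L)) (fun _ => by positivity)
          (sub_left_injective.comp Nat.cast_injective)
    _ = exp L * ∑' k : ℤ, exp (-(L / 2)) ^ k.natAbs := tsum_mul_left

end GaussianLatticeSum

lemma inv_pow_mul_pow_eq_exp {a r : ℝ} (ha0 : 0 < a) (ha1 : a ≠ 1) (hr : 0 < r) (j : ℕ) :
    (a ^ (j * (j - 1) / 2))⁻¹ * r ^ j =
      exp (log a / 8) * exp (-(log a / 2) * (j - (log r / log a + 1 / 2)) ^ 2) *
        exp (log r ^ 2 / (2 * log a) + log r / 2) := by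
  have hL : log a ≠ 0 := log_ne_zero_of_pos_of_ne_one ha0 ha1
  have htri : ((j * (j - 1) / 2 : ℕ) : ℝ) = j * (j - 1) / 2 := by
    rw [← Nat.choose_two_right, Nat.cast_choose_two]
  rw [← exp_log ha0, ← exp_log hr, ← exp_nat_mul, ← exp_nat_mul, ← exp_neg, ← exp_add,
    ← exp_add, ← exp_add, htri, log_exp, log_exp]
  congr 1
  field_simp
  ring

section Majorant

variable {a : ℝ} (ha : 1 < a)
include ha

lemma summable_inv_pow_mul_pow {r : ℝ} (hr : 0 < r) :
    Summable fun j : ℕ => (a ^ (j * (j - 1) / 2))⁻¹ * r ^ j := by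
  simp_rw [inv_pow_mul_pow_eq_exp (by linarith) ha.ne' hr]
  exact ((summable_exp_neg_mul_sq_sub (by linarith [log_pos ha]) _).mul_left _).mul_right _

lemma tsum_inv_pow_mul_pow_isBigO :
    (fun r : ℝ => ∑' j : ℕ, (a ^ (j * (j - 1) / 2))⁻¹ * r ^ j) =O[atTop]
      fun r => exp (log r ^ 2 / (2 * log a) + log r / 2) := by
  refine .of_bound (exp (log a / 8) * (exp (log a) * ∑' k : ℤ, exp (-(log a / 2)) ^ k.natAbs)) ?_
  filter_upwards [eventually_gt_atTop 0] with r hr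
  simp_rw [inv_pow_mul_pow_eq_exp (by linarith) ha.ne' hr, tsum_mul_right, tsum_mul_left,
    norm_mul, norm_of_nonneg (exp_pos _).le]
  gcongr
  rw [norm_of_nonneg (tsum_nonneg fun _ => (exp_pos _).le)]
  exact tsum_exp_neg_mul_sq_sub_le (log_pos ha) (log r / log a + 1 / 2)

end Majorant

lemma pow_isLittleO_exp_log_sq {L : ℝ} (hL : 0 < L) (N : ℕ) :
    (fun r : ℝ => r ^ N) =o[atTop] fun r => exp (log r ^ 2 / (2 * L) + log r / 2) := by
  have hquad : Tendsto (fun t : ℝ => t * (t / (2 * L) + (1 / 2 - N))) atTop atTop :=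
    tendsto_id.atTop_mul_atTop₀ <|
      tendsto_atTop_add_const_right _ _ (tendsto_id.atTop_div_const (by positivity))
  have hexp : (fun r => exp (log r * N)) =o[atTop]
      fun r => exp (log r ^ 2 / (2 * L) + log r / 2) :=
    isLittleO_exp_comp_exp_comp.mpr <| (hquad.comp tendsto_log_atTop).congr fun r => by
      simp only [Function.comp_apply]
      ring
  refine hexp.congr' ?_ EventuallyEq.rfl
  filter_upwards [eventually_gt_atTop 0] with r hr
  rw [← rpow_def_of_pos hr, rpow_natCast]

theorem isLittleO_tsum_norm_mul_pow {E : Type*} [NormedAddCommGroup E] {c : ℕ → E}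
    {b : ℕ → ℝ} {F : ℝ → ℝ} (hb : ∀ j, 0 ≤ b j) (hc : c =o[atTop] b)
    (hbs : ∀ᶠ r in atTop, Summable fun j => b j * r ^ j)
    (hbF : (fun r => ∑' j, b j * r ^ j) =O[atTop] F)
    (hpow : ∀ N : ℕ, (fun r : ℝ => r ^ N) =o[atTop] F) :
    (fun r => ∑' j, ‖c j‖ * r ^ j) =o[atTop] F := by
  rw [isLittleO_iff]
  intro ε hε
  obtain ⟨C, hC, hbC⟩ := hbF.exists_pos
  set δ := ε / (2 * C)
  obtain ⟨N, hN⟩ := eventually_atTop.mp (hc.def (by positivity : 0 < δ))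
  have hhead : (fun r : ℝ => ∑ j ∈ Finset.range N, ‖c j‖ * r ^ j) =o[atTop] F := by
    simpa only [Finset.sum_fn] using
      IsLittleO.sum (s := Finset.range N) fun j _ => (hpow j).const_mul_left ‖c j‖
  filter_upwards [hbs, hbC.bound, hhead.def (half_pos hε), eventually_ge_atTop 0]
    with r hbr hbrF hheadr hr
  have htail : ∀ k, ‖c (k + N)‖ * r ^ (k + N) ≤ δ * (b (k + N) * r ^ (k + N)) := fun k => by
    have hcb := hN (k + N) (Nat.le_add_left N k)
    rw [norm_of_nonneg (hb _)] at hcb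
    exact (mul_le_mul_of_nonneg_right hcb (pow_nonneg hr _)).trans_eq (mul_assoc _ _ _)
  have hbt : Summable fun k => b (k + N) * r ^ (k + N) := (summable_nat_add_iff N).mpr hbr
  have hcs : Summable fun j => ‖c j‖ * r ^ j := (summable_nat_add_iff N).mp <|
    .of_nonneg_of_le (fun _ => by positivity) htail (hbt.mul_left δ)
  rw [norm_of_nonneg (tsum_nonneg fun _ => by positivity), ← hcs.sum_add_tsum_nat_add N]
  calc ∑ j ∈ Finset.range N, ‖c j‖ * r ^ j + ∑' k, ‖c (k + N)‖ * r ^ (k + N)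
      ≤ ε / 2 * ‖F r‖ + δ * ∑' k, b (k + N) * r ^ (k + N) := by
        rw [← tsum_mul_left]
        exact add_le_add ((le_norm_self _).trans hheadr)
          (hcs.comp_injective (add_left_injective N) |>.tsum_le_tsum htail (hbt.mul_left δ))
    _ ≤ ε / 2 * ‖F r‖ + δ * (C * ‖F r‖) := by
        gcongr
        calc ∑' k, b (k + N) * r ^ (k + N) ≤ ∑' j, b j * r ^ j :=
              tsum_comp_le_tsum_of_inj hbr (fun j => mul_nonneg (hb j) (pow_nonneg hr j))
                (add_left_injective N)
          _ ≤ C * ‖F r‖ := (le_norm_self _).trans hbrF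
    _ = ε * ‖F r‖ := by simp only [δ]; field_simp; ring

lemma iSup_sphere_norm_tsum_le (c : ℕ → ℂ) {r : ℝ} (hr : 0 ≤ r) :
    ⨆ z : Metric.sphere (0 : ℂ) r, ‖∑' j, c j * (z : ℂ) ^ j‖ ≤ ∑' j, ‖c j‖ * r ^ j := by
  refine Real.iSup_le (fun z => ?_) (tsum_nonneg fun _ => by positivity)
  have hterm : ∀ j, ‖c j * (z : ℂ) ^ j‖ = ‖c j‖ * r ^ j := fun j => by
    rw [norm_mul, norm_pow, mem_sphere_zero_iff_norm.mp z.2]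
  by_cases hs : Summable fun j => c j * (z : ℂ) ^ j
  · exact (norm_tsum_le_tsum_norm hs.norm).trans_eq (tsum_congr hterm)
  · rw [tsum_eq_zero_of_not_summable hs, norm_zero]
    exact tsum_nonneg fun _ => by positivity

/-- If `c_j = o(a^{-j(j-1)/2})` then the entire function `φ(z) = ∑ c_j z^j` satisfies
`M(r;φ) = o(exp((ln r)²/(2 ln a) + (ln r)/2))` as `r → ∞`. -/
theorem max_modulus_littleO (a : ℝ) (ha : 1 < a) (c : ℕ → ℝ)
    (hc : (fun j : ℕ => c j) =o[atTop] fun j : ℕ => (a ^ (j * (j - 1) / 2))⁻¹) :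
    (fun r : ℝ => ⨆ z : Metric.sphere (0 : ℂ) r, ‖∑' j : ℕ, (c j : ℂ) * (z : ℂ) ^ j‖)
      =o[atTop] fun r : ℝ =>
        Real.exp ((Real.log r) ^ 2 / (2 * Real.log a) + Real.log r / 2) := by
  have hcoef := isLittleO_tsum_norm_mul_pow (fun j => by positivity) hc
    ((eventually_gt_atTop 0).mono fun _ hr => summable_inv_pow_mul_pow ha hr)
    (tsum_inv_pow_mul_pow_isBigO ha) (pow_isLittleO_exp_log_sq (log_pos ha))
  refine IsBigO.trans_isLittleO (.of_bound 1 ?_) hcoef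
  filter_upwards [eventually_ge_atTop 0] with r hr
  rw [one_mul, norm_of_nonneg (Real.iSup_nonneg fun _ => norm_nonneg _)]
  simpa only [Complex.norm_real] using
    (iSup_sphere_norm_tsum_le (fun j => (c j : ℂ)) hr).trans (le_norm_self _)
end

section
/- Let a > 1 and let φ be a nonzero entire function with φ(a^k) = 0 for all k ∈ ℕ₀. Then there exists C > 0 such that for all sufficiently large k, M(a^k; φ) ≥ C exp( (ln a^k)²/(2 ln a) + (ln a^k)/2 ), where M(r;φ) = max_{|z|=r}|φ(z)|. -/
open Finset Metric

/-- Auxiliary sequence: successively divide out the zeros `a^0, a^1, …` of `φ`. -/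
noncomputable def gseq (a : ℝ) (φ : ℂ → ℂ) : ℕ → ℂ → ℂ
  | 0 => φ
  | k + 1 => dslope (gseq a φ k) ((a : ℂ) ^ k)

lemma differentiable_dslope' {f : ℂ → ℂ} (hf : Differentiable ℂ f) (c : ℂ) :
    Differentiable ℂ (dslope f c) := by
  intro z
  rcases eq_or_ne z c with rfl | hz
  · obtain ⟨p, hp⟩ := (Complex.analyticOnNhd_univ_iff_differentiable.mpr hf) z (Set.mem_univ z)
    exact hp.has_fpower_series_dslope_fslope.differentiableAt
  · have hev : dslope f c =ᶠ[nhds z] slope f c := dslope_eventuallyEq_slope_of_ne f hz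
    have : DifferentiableAt ℂ (slope f c) z := by
      have : DifferentiableAt ℂ (fun w => (f w - f c) / (w - c)) z :=
        ((hf z).sub_const (f c)).div (differentiableAt_id.sub_const c) (sub_ne_zero.mpr hz)
      refine this.congr_of_eventuallyEq ?_
      filter_upwards with w
      simp [slope, div_eq_inv_mul, smul_eq_mul]
    exact this.congr_of_eventuallyEq hev

lemma gseq_spec (a : ℝ) (ha : 1 < a) (φ : ℂ → ℂ) (hφ : Differentiable ℂ φ)
    (hzero : ∀ k : ℕ, φ ((a : ℂ) ^ k) = 0) (k : ℕ) :
    Differentiable ℂ (gseq a φ k) ∧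
      ∀ z : ℂ, φ z = (∏ j ∈ range k, (z - (a : ℂ) ^ j)) * gseq a φ k z := by
  induction k with
  | zero => exact ⟨hφ, fun z => by simp [gseq]⟩
  | succ k ih =>
    obtain ⟨hd, heq⟩ := ih
    have hgz : gseq a φ k ((a : ℂ) ^ k) = 0 := by
      have h0 := hzero k
      rw [heq ((a : ℂ) ^ k)] at h0
      have hprod : (∏ j ∈ range k, ((a : ℂ) ^ k - (a : ℂ) ^ j)) ≠ 0 := by
        rw [Finset.prod_ne_zero_iff]
        intro j hj
        rw [mem_range] at hj
        have hlt : (a : ℝ) ^ j < a ^ k := pow_lt_pow_right₀ ha hj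
        rw [sub_ne_zero]
        intro hcontra
        have h2 : ((a ^ k : ℝ) : ℂ) = ((a ^ j : ℝ) : ℂ) := by push_cast; exact hcontra
        exact absurd (Complex.ofReal_inj.mp h2) hlt.ne'
      exact (mul_eq_zero.mp h0).resolve_left hprod
    refine ⟨differentiable_dslope' hd _, fun z => ?_⟩
    have key : (z - (a : ℂ) ^ k) * gseq a φ (k + 1) z = gseq a φ k z := by
      have h := sub_smul_dslope (gseq a φ k) ((a : ℂ) ^ k) z
      rw [smul_eq_mul, hgz, sub_zero] at h
      simpa [gseq] using h
    rw [Finset.prod_range_succ]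
    calc φ z = (∏ j ∈ range k, (z - (a : ℂ) ^ j)) * gseq a φ k z := heq z
      _ = (∏ j ∈ range k, (z - (a : ℂ) ^ j)) * ((z - (a : ℂ) ^ k) * gseq a φ (k + 1) z) := by
          rw [key]
      _ = (∏ j ∈ range k, (z - (a : ℂ) ^ j)) * (z - (a : ℂ) ^ k) * gseq a φ (k + 1) z := by
          ring

lemma exp_bound_aux {a x : ℝ} (ha : 1 < a) (hx0 : 0 ≤ x) (hx : x ≤ 1 / a) :
    Real.exp (a * Real.log (1 - 1 / a) * x) ≤ 1 - x := by
  have ha0 : (0 : ℝ) < a := lt_trans one_pos ha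
  have h1a : (0 : ℝ) < 1 - 1 / a := by
    rw [sub_pos, div_lt_one ha0]; exact ha
  have ht0 : 0 ≤ a * x := mul_nonneg ha0.le hx0
  have ht1 : a * x ≤ 1 := by
    calc a * x ≤ a * (1 / a) := by gcongr
      _ = 1 := by field_simp
  have hcvx := convexOn_exp.2 (Set.mem_univ (Real.log (1 - 1 / a))) (Set.mem_univ (0 : ℝ))
    ht0 (by linarith : (0:ℝ) ≤ 1 - a * x) (by ring)
  simp only [smul_eq_mul, mul_zero, add_zero, Real.exp_zero] at hcvx
  have hexp : Real.exp (Real.log (1 - 1 / a)) = 1 - 1 / a := Real.exp_log h1a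
  calc Real.exp (a * Real.log (1 - 1 / a) * x)
      = Real.exp (a * x * Real.log (1 - 1 / a)) := by ring_nf
    _ ≤ a * x * Real.exp (Real.log (1 - 1 / a)) + (1 - a * x) * 1 := hcvx
    _ = 1 - x := by rw [hexp]; field_simp; ring

lemma geom_bound {a : ℝ} (ha : 1 < a) (n : ℕ) :
    ∑ i ∈ range n, (1 / a) ^ i ≤ 1 / (1 - 1 / a) := by
  have ha0 : (0 : ℝ) < a := lt_trans one_pos ha
  have h1a : (0 : ℝ) < 1 - 1 / a := by rw [sub_pos, div_lt_one ha0]; exact ha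
  have hne : (1 / a : ℝ) ≠ 1 := by
    intro h; rw [div_eq_one_iff_eq ha0.ne'] at h; exact (ha.ne' h.symm)
  rw [geom_sum_eq hne]
  have heq : ((1 / a : ℝ) ^ n - 1) / (1 / a - 1) = (1 - (1 / a) ^ n) / (1 - 1 / a) := by
    rw [← neg_div_neg_eq]; ring_nf
  rw [heq]
  rw [div_le_div_iff₀ h1a h1a]
  have hpow : (0:ℝ) ≤ (1 / a) ^ n := pow_nonneg (by positivity) n
  nlinarith

/-- Jensen-formula lower bound: if `φ` is a nonzero entire function vanishing at every
`a^k`, `k ∈ ℕ₀` (with `a > 1`), then for some `C > 0` and all large `k`,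
`M(a^k;φ) ≥ C exp((ln a^k)²/(2 ln a) + (ln a^k)/2)`. -/
theorem jensen_lower_bound (a : ℝ) (ha : 1 < a) (φ : ℂ → ℂ)
    (hφ : Differentiable ℂ φ) (hne : φ ≠ 0)
    (hzero : ∀ k : ℕ, φ ((a : ℂ) ^ k) = 0) :
    ∃ C > (0 : ℝ), ∃ k₀ : ℕ, ∀ k : ℕ, k₀ ≤ k →
      C * Real.exp ((Real.log (a ^ k)) ^ 2 / (2 * Real.log a) + Real.log (a ^ k) / 2) ≤
        ⨆ z : Metric.sphere (0 : ℂ) (a ^ k), ‖φ z‖ := by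
  have ha0 : (0:ℝ) < a := lt_trans one_pos ha
  have hloga : 0 < Real.log a := Real.log_pos ha
  have h1a : (0:ℝ) < 1 - 1/a := by rw [sub_pos, div_lt_one ha0]; exact ha
  have h1a' : (1:ℝ)/a ≤ 1 := by linarith
  -- choose a base point where φ does not vanish
  have hzex : ∃ z₀ ∈ Metric.ball (0:ℂ) (1/2), φ z₀ ≠ 0 := by
    by_contra hcon
    push_neg at hcon
    apply hne
    have hA : AnalyticOnNhd ℂ φ Set.univ := Complex.analyticOnNhd_univ_iff_differentiable.mpr hφ
    have hev : φ =ᶠ[nhds (0:ℂ)] 0 := by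
      filter_upwards [Metric.ball_mem_nhds (0:ℂ) (by norm_num : (0:ℝ) < 1/2)] with z hz
      exact hcon z hz
    have heq := hA.eqOn_zero_of_preconnected_of_eventuallyEq_zero isPreconnected_univ
      (Set.mem_univ (0:ℂ)) hev
    funext z
    exact heq (Set.mem_univ z)
  obtain ⟨z₀, hz₀ball, hφz₀⟩ := hzex
  have hz₀norm : ‖z₀‖ < 1/2 := by simpa [Metric.mem_ball, dist_zero_right] using hz₀ball
  have hφz₀pos : 0 < ‖φ z₀‖ := norm_pos_iff.mpr hφz₀
  set c : ℝ := a * Real.log (1 - 1/a) with hc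
  set A : ℝ := 1 / (1 - 1/a) with hA
  have hApos : 0 < A := by positivity
  have hcneg : c ≤ 0 :=
    mul_nonpos_of_nonneg_of_nonpos ha0.le
      (Real.log_nonpos (by linarith) (by nlinarith [one_div_pos.mpr ha0]))
  refine ⟨‖φ z₀‖ * Real.exp (c * A - A / 2), by positivity, 0, fun k _ => ?_⟩
  have hRpos : (0:ℝ) < a ^ k := pow_pos ha0 k
  have hR1 : (1:ℝ) ≤ a ^ k := by
    calc (1:ℝ) = 1 ^ k := (one_pow k).symm
      _ ≤ a ^ k := pow_le_pow_left₀ zero_le_one ha.le k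
  obtain ⟨hgd, hgeq⟩ := gseq_spec a ha φ hφ hzero k
  set g : ℂ → ℂ := gseq a φ k with hg
  set S : ℝ := ⨆ z : Metric.sphere (0 : ℂ) (a ^ k), ‖φ z‖ with hS
  set m : ℝ := ∏ j ∈ range k, ((a:ℝ) ^ k - a ^ j) with hm
  set Q : ℝ := ∏ j ∈ range k, ((a:ℝ) ^ j + 1/2) with hQ
  have hfact : ∀ j ∈ range k, (0:ℝ) < a ^ k - a ^ j := by
    intro j hj; rw [mem_range] at hj
    have := pow_lt_pow_right₀ ha hj; linarith
  have hmpos : 0 < m := Finset.prod_pos hfact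
  have hQpos : 0 < Q := Finset.prod_pos (fun j _ => by positivity)
  have hnormpow : ∀ j : ℕ, ‖((a:ℂ)) ^ j‖ = (a:ℝ) ^ j := by
    intro j
    rw [norm_pow, Complex.norm_real, Real.norm_eq_abs, abs_of_pos ha0]
  -- lower bound for ‖φ‖ on the sphere in terms of g
  have hsphere : ∀ z : ℂ, z ∈ Metric.sphere (0:ℂ) (a ^ k) → m * ‖g z‖ ≤ ‖φ z‖ := by
    intro z hz
    have hzn : ‖z‖ = a ^ k := by simpa [mem_sphere_iff_norm] using hz
    rw [hgeq z, norm_mul, norm_prod]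
    have hmle : m ≤ ∏ j ∈ range k, ‖z - (a:ℂ) ^ j‖ := by
      apply Finset.prod_le_prod (fun j hj => (hfact j hj).le)
      intro j hj
      calc (a:ℝ) ^ k - a ^ j = ‖z‖ - ‖((a:ℂ)) ^ j‖ := by rw [hzn, hnormpow]
        _ ≤ ‖z - (a:ℂ) ^ j‖ := norm_sub_norm_le _ _
    exact mul_le_mul_of_nonneg_right hmle (norm_nonneg _)
  -- the sup is well defined
  have hBdd : BddAbove (Set.range fun z : Metric.sphere (0:ℂ) (a ^ k) => ‖φ z‖) := by
    have h1 : IsCompact ((fun z : ℂ => ‖φ z‖) '' (Metric.sphere (0:ℂ) (a ^ k))) :=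
      (isCompact_sphere (0:ℂ) (a ^ k)).image (hφ.continuous.norm)
    have h2 := h1.bddAbove
    simpa [Set.image_eq_range] using h2
  have hSle : ∀ z ∈ Metric.sphere (0:ℂ) (a ^ k), ‖φ z‖ ≤ S := fun z hz =>
    le_ciSup hBdd (⟨z, hz⟩ : Metric.sphere (0:ℂ) (a ^ k))
  -- maximum modulus principle applied to g
  have hgm : ‖g z₀‖ ≤ S / m := by
    have hfr : frontier (Metric.ball (0:ℂ) (a ^ k)) = Metric.sphere (0:ℂ) (a ^ k) :=
      frontier_ball (0:ℂ) hRpos.ne'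
    have hcl : z₀ ∈ closure (Metric.ball (0:ℂ) (a ^ k)) := by
      rw [closure_ball (0:ℂ) hRpos.ne', Metric.mem_closedBall, dist_zero_right]
      linarith
    refine Complex.norm_le_of_forall_mem_frontier_norm_le Metric.isBounded_ball
      (hgd.diffContOnCl) ?_ hcl
    intro z hz
    rw [hfr] at hz
    rw [le_div_iff₀ hmpos]
    calc ‖g z‖ * m = m * ‖g z‖ := mul_comm _ _
      _ ≤ ‖φ z‖ := hsphere z hz
      _ ≤ S := hSle z hz
  have hmax : m * ‖g z₀‖ ≤ S := by
    have h := (le_div_iff₀ hmpos).mp hgm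
    linarith
  -- upper bound for ‖φ z₀‖
  have hlow : ‖φ z₀‖ ≤ Q * ‖g z₀‖ := by
    rw [hgeq z₀, norm_mul, norm_prod]
    have hQle : ∏ j ∈ range k, ‖z₀ - (a:ℂ) ^ j‖ ≤ Q := by
      apply Finset.prod_le_prod (fun j _ => norm_nonneg _)
      intro j hj
      calc ‖z₀ - (a:ℂ) ^ j‖ ≤ ‖z₀‖ + ‖((a:ℂ)) ^ j‖ := norm_sub_le _ _
        _ ≤ (a:ℝ) ^ j + 1/2 := by rw [hnormpow]; linarith
    exact mul_le_mul_of_nonneg_right hQle (norm_nonneg _)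
  -- powers as exponentials
  have hpowexp : ∀ n : ℕ, (a:ℝ) ^ n = Real.exp (n * Real.log a) := by
    intro n; rw [← Real.log_pow, Real.exp_log (pow_pos ha0 n)]
  -- sum bound for the reversed geometric sum
  have hsum' : ∑ j ∈ range k, ((1:ℝ)/a) ^ (k - j) ≤ A := by
    have hreflect := Finset.sum_range_reflect (fun j => ((1:ℝ)/a) ^ (k - j)) k
    rw [← hreflect]
    calc ∑ j ∈ range k, ((1:ℝ)/a) ^ (k - (k - 1 - j))
        ≤ ∑ j ∈ range k, ((1:ℝ)/a) ^ j := by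
          apply Finset.sum_le_sum
          intro j hj
          rw [mem_range] at hj
          have hexp : k - (k - 1 - j) = j + 1 := by omega
          rw [hexp]
          exact pow_le_pow_of_le_one (by positivity) h1a' (Nat.le_succ j)
      _ ≤ A := geom_bound ha k
  -- lower bound for m
  have hm_lb : Real.exp ((k:ℝ) * k * Real.log a + c * A) ≤ m := by
    have step1 : ∏ j ∈ range k, ((a:ℝ) ^ k * Real.exp (c * (1/a) ^ (k - j))) ≤ m := by
      apply Finset.prod_le_prod (fun j _ => by positivity)
      intro j hj
      rw [mem_range] at hj
      have hxle : ((1:ℝ)/a) ^ (k - j) ≤ 1/a := by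
        calc ((1:ℝ)/a) ^ (k - j) ≤ ((1:ℝ)/a) ^ 1 :=
              pow_le_pow_of_le_one (by positivity) h1a' (by omega)
          _ = 1/a := pow_one _
      have hx0 : (0:ℝ) ≤ (1/a) ^ (k - j) := by positivity
      have hexple := exp_bound_aux ha hx0 hxle
      have hpow : (a:ℝ) ^ j = a ^ k * (1/a) ^ (k - j) := by
        rw [div_pow, one_pow, mul_one_div, eq_div_iff (by positivity), ← pow_add]
        congr 1
        omega
      calc (a:ℝ) ^ k * Real.exp (c * (1/a) ^ (k - j))
          ≤ a ^ k * (1 - (1/a) ^ (k - j)) := by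
            apply mul_le_mul_of_nonneg_left _ hRpos.le
            rw [hc, mul_assoc]
            rw [mul_assoc] at hexple
            exact hexple
        _ = a ^ k - a ^ j := by rw [hpow]; ring
    refine le_trans ?_ step1
    rw [Finset.prod_mul_distrib, Finset.prod_const, Finset.card_range, ← Real.exp_sum,
      ← Finset.mul_sum, ← pow_mul, hpowexp (k*k), ← Real.exp_add]
    apply Real.exp_le_exp.mpr
    have hca : c * A ≤ c * ∑ j ∈ range k, ((1:ℝ)/a) ^ (k - j) :=
      mul_le_mul_of_nonpos_left hsum' hcneg
    push_cast
    linarith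
  -- upper bound for Q
  set s : ℕ := ∑ j ∈ range k, j with hsdef
  have hsnat : s * 2 + k = k * k := by
    rw [hsdef, Finset.sum_range_id_mul_two]
    rcases k with _ | n
    · simp
    · have h1 : n + 1 - 1 = n := rfl
      rw [h1]
      ring
  have hsgauss : (s:ℝ) * 2 + k = (k:ℝ) * k := by exact_mod_cast hsnat
  have hQ_ub : Q ≤ Real.exp ((s:ℝ) * Real.log a + A / 2) := by
    have step1 : Q ≤ ∏ j ∈ range k, ((a:ℝ) ^ j * Real.exp ((1/2) * (1/a) ^ j)) := by
      apply Finset.prod_le_prod (fun j _ => by positivity)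
      intro j hj
      have hhalf : (a:ℝ) ^ j * ((1/2) * (1/a) ^ j) = 1/2 := by
        rw [div_pow, one_pow]
        field_simp
      have hexp := Real.add_one_le_exp ((1/2) * (1/a:ℝ) ^ j)
      calc (a:ℝ) ^ j + 1/2 = a ^ j * (1 + (1/2) * (1/a) ^ j) := by
            rw [mul_add, mul_one, hhalf]
        _ ≤ a ^ j * Real.exp ((1/2) * (1/a) ^ j) := by
            apply mul_le_mul_of_nonneg_left _ (pow_nonneg ha0.le j)
            linarith
    refine le_trans step1 ?_
    rw [Finset.prod_mul_distrib, ← Real.exp_sum, Finset.prod_pow_eq_pow_sum, ← hsdef,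
      hpowexp s, ← Real.exp_add]
    apply Real.exp_le_exp.mpr
    have hsum2 : ∑ j ∈ range k, (1/2) * ((1:ℝ)/a) ^ j ≤ A / 2 := by
      rw [← Finset.mul_sum]
      have h3 := geom_bound ha k
      rw [hA]
      linarith
    linarith
  -- rewrite the exponent in the goal
  have hbig : (Real.log (a ^ k)) ^ 2 / (2 * Real.log a) + Real.log (a ^ k) / 2
      = ((k:ℝ) * k + k) / 2 * Real.log a := by
    rw [Real.log_pow]
    field_simp
  rw [hbig]
  -- final chain
  have key : (‖φ z₀‖ * Real.exp (c * A - A / 2)) *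
      Real.exp (((k:ℝ) * k + k) / 2 * Real.log a) * Q ≤ ‖φ z₀‖ * m := by
    calc (‖φ z₀‖ * Real.exp (c * A - A / 2)) *
        Real.exp (((k:ℝ) * k + k) / 2 * Real.log a) * Q
        ≤ (‖φ z₀‖ * Real.exp (c * A - A / 2)) *
          Real.exp (((k:ℝ) * k + k) / 2 * Real.log a) *
          Real.exp ((s:ℝ) * Real.log a + A / 2) := by
          apply mul_le_mul_of_nonneg_left hQ_ub (by positivity)
      _ = ‖φ z₀‖ * (Real.exp (c * A - A / 2) *
            Real.exp (((k:ℝ) * k + k) / 2 * Real.log a) *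
            Real.exp ((s:ℝ) * Real.log a + A / 2)) := by ring
      _ = ‖φ z₀‖ * Real.exp (c * A - A / 2 + ((k:ℝ) * k + k) / 2 * Real.log a
            + ((s:ℝ) * Real.log a + A / 2)) := by rw [← Real.exp_add, ← Real.exp_add]
      _ = ‖φ z₀‖ * Real.exp ((k:ℝ) * k * Real.log a + c * A) := by
          congr 2
          linear_combination (Real.log a / 2) * hsgauss
      _ ≤ ‖φ z₀‖ * m := mul_le_mul_of_nonneg_left hm_lb (norm_nonneg _)
  have hchain : (‖φ z₀‖ * Real.exp (c * A - A / 2)) *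
      Real.exp (((k:ℝ) * k + k) / 2 * Real.log a) * Q ≤ S * Q := by
    calc (‖φ z₀‖ * Real.exp (c * A - A / 2)) *
        Real.exp (((k:ℝ) * k + k) / 2 * Real.log a) * Q
        ≤ ‖φ z₀‖ * m := key
      _ ≤ (Q * ‖g z₀‖) * m := mul_le_mul_of_nonneg_right hlow hmpos.le
      _ = (m * ‖g z₀‖) * Q := by ring
      _ ≤ S * Q := mul_le_mul_of_nonneg_right hmax hQpos.le
  exact le_of_mul_le_mul_right hchain hQpos
end

section
/- Let f(z) = ∑_{j=0}^∞ p_j z^j be entire with p_j ≥ 0 and lim_{r→∞} ln f(r)/(ln r)² = β ∈ (0,∞). Then limsup_{j→∞} (ln p_j)/j² ≤ -1/(4β). -/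
open Filter Topology Real

/-! If the coefficients of `F(r) = ∑ pⱼ rʲ` satisfied `log pⱼ ≤ -c j²` for all large `j`, then
`pⱼ eʲᵗ ≤ C e^{t²/(2c)} e^{-cj/2}` and hence `log F(eᵗ) ≤ t²/(2c) + O(1)`; with `c = 1/β` this
contradicts `log F(r) ~ β (log r)²`, so `log pⱼ / j²` is not eventually below `-1/β` and its
`limsup` is a genuine real number. For the upper bound, given `b > β` we have
`log F(r) ≤ b (log r)²` for large `r`, and the Cauchy estimate `pⱼ rʲ ≤ F(r)` at the optimal
radius `log r = j/(2b)` gives `log pⱼ ≤ -j²/(4b)`; finally let `b ↓ β`. -/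

section

variable {p : ℕ → ℝ}

theorem log_coeff_le_log_tsum_sub (hp : ∀ i, 0 ≤ p i) {j : ℕ} (hpj : 0 < p j) {s : ℝ}
    (hsum : Summable fun i => p i * exp s ^ i) :
    log (p j) ≤ log (∑' i, p i * exp s ^ i) - j * s := by
  have hcauchy : p j * exp s ^ j ≤ ∑' i, p i * exp s ^ i :=
    hsum.le_tsum j fun i _ => mul_nonneg (hp i) (by positivity)
  have hlog := log_le_log (by positivity) hcauchy
  rw [log_mul hpj.ne' (by positivity), log_pow, log_exp] at hlog
  linarith

theorem eventually_log_coeff_div_sq_le (hp : ∀ j, 0 < p j)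
    (hent : ∀ r : ℝ, 0 < r → Summable fun j => p j * r ^ j) {b : ℝ} (hb : 0 < b)
    (hF : ∀ᶠ r in atTop, log (∑' j, p j * r ^ j) ≤ b * log r ^ 2) :
    ∀ᶠ j : ℕ in atTop, log (p j) / (j : ℝ) ^ 2 ≤ -1 / (4 * b) := by
  have hradius : Tendsto (fun j : ℕ => exp (j / (2 * b))) atTop atTop :=
    tendsto_exp_atTop.comp (tendsto_natCast_atTop_atTop.atTop_div_const (by positivity))
  filter_upwards [hradius.eventually hF, eventually_gt_atTop 0] with j hFj hj
  rw [log_exp] at hFj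
  have hcauchy := log_coeff_le_log_tsum_sub (fun i => (hp i).le) (hp j)
    (hent (exp (j / (2 * b))) (exp_pos _))
  have hopt : b * (j / (2 * b)) ^ 2 - j * (j / (2 * b)) = -1 / (4 * b) * (j : ℝ) ^ 2 := by
    field_simp
    ring
  rw [div_le_iff₀ (by positivity)]
  linarith

theorem tsum_mul_exp_pow_le (hp : ∀ j, 0 ≤ p j) {C c : ℝ} (hc : 0 < c)
    (hC : ∀ j : ℕ, p j ≤ C * exp (-c * j ^ 2)) (t : ℝ) :
    ∑' j, p j * exp t ^ j ≤ C / (1 - exp (-c / 2)) * exp (t ^ 2 / (2 * c)) := by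
  set q := exp (-c / 2)
  have hq1 : q < 1 := exp_lt_one_iff.2 (by linarith)
  have hC0 : 0 ≤ C := nonneg_of_mul_nonneg_left ((hp 0).trans (hC 0)) (exp_pos _)
  have hterm (j : ℕ) : p j * exp t ^ j ≤ C * exp (t ^ 2 / (2 * c)) * q ^ j := by
    have hexp : -c * j ^ 2 + j * t ≤ t ^ 2 / (2 * c) + j * (-c / 2) := by
      have hsq : (j : ℝ) ≤ (j : ℝ) ^ 2 := by exact_mod_cast Nat.le_self_pow two_ne_zero j
      rw [div_add' _ _ _ (by positivity), le_div_iff₀ (by positivity)]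
      nlinarith [sq_nonneg (c * j - t), mul_le_mul_of_nonneg_left hsq (sq_nonneg c)]
    calc p j * exp t ^ j ≤ C * exp (-c * j ^ 2) * exp (j * t) := by
          rw [← exp_nat_mul]
          gcongr
          exact hC j
      _ ≤ C * exp (t ^ 2 / (2 * c) + j * (-c / 2)) := by
          rw [mul_assoc, ← exp_add]
          gcongr
      _ = C * exp (t ^ 2 / (2 * c)) * q ^ j := by
          rw [exp_add, exp_nat_mul, mul_assoc]
  have hgeom : Summable fun j : ℕ => C * exp (t ^ 2 / (2 * c)) * q ^ j :=
    (summable_geometric_of_lt_one (exp_pos _).le hq1).mul_left _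
  calc ∑' j, p j * exp t ^ j ≤ ∑' j : ℕ, C * exp (t ^ 2 / (2 * c)) * q ^ j :=
        (hgeom.of_nonneg_of_le (fun j => by positivity [hp j]) hterm).tsum_le_tsum hterm hgeom
    _ = C / (1 - q) * exp (t ^ 2 / (2 * c)) := by
        rw [tsum_mul_left, tsum_geometric_of_lt_one (exp_pos _).le hq1]
        ring

theorem le_of_tendsto_log_tsum_div_sq (hp : ∀ j, 0 < p j)
    (hent : ∀ r : ℝ, 0 < r → Summable fun j => p j * r ^ j) {β : ℝ}
    (hlim : Tendsto (fun r => log (∑' j, p j * r ^ j) / log r ^ 2) atTop (𝓝 β))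
    {C c : ℝ} (hc : 0 < c) (hC : ∀ j : ℕ, p j ≤ C * exp (-c * j ^ 2)) :
    β ≤ 1 / (2 * c) := by
  set K := C / (1 - exp (-c / 2))
  have hlim' : Tendsto (fun t => log (∑' j, p j * exp t ^ j) / t ^ 2) atTop (𝓝 β) := by
    simpa only [Function.comp_def, log_exp] using hlim.comp tendsto_exp_atTop
  have hbound : Tendsto (fun t => log K / t ^ 2 + 1 / (2 * c)) atTop (𝓝 (0 + 1 / (2 * c))) :=
    (tendsto_const_nhds.div_atTop (tendsto_pow_atTop two_ne_zero)).add_const _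
  rw [zero_add] at hbound
  refine le_of_tendsto_of_tendsto hlim' hbound ?_
  filter_upwards [eventually_gt_atTop 0] with t ht
  have hsum := hent (exp t) (exp_pos t)
  have hF : 0 < ∑' j, p j * exp t ^ j :=
    hsum.tsum_pos (fun j => by positivity [(hp j).le]) 0 (by simpa using hp 0)
  have hFK := tsum_mul_exp_pow_le (fun j => (hp j).le) hc hC t
  have hK : 0 < K := pos_of_mul_pos_left (hF.trans_le hFK) (exp_pos _).le
  have hlog := log_le_log hF hFK
  rw [log_mul hK.ne' (exp_ne_zero _), log_exp] at hlog
  rw [div_add' _ _ _ (by positivity), div_le_div_iff_of_pos_right (by positivity)]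
  field_simp at hlog ⊢
  linarith

theorem frequently_le_log_coeff_div_sq (hp : ∀ j, 0 < p j)
    (hent : ∀ r : ℝ, 0 < r → Summable fun j => p j * r ^ j) {β : ℝ} (hβ : 0 < β)
    (hlim : Tendsto (fun r => log (∑' j, p j * r ^ j) / log r ^ 2) atTop (𝓝 β)) :
    ∃ᶠ j : ℕ in atTop, -1 / β ≤ log (p j) / (j : ℝ) ^ 2 := by
  by_contra hsmall
  have hev : ∀ᶠ j : ℕ in atTop, p j ≤ exp (-(1 / β) * j ^ 2) := by
    filter_upwards [not_frequently.1 hsmall, eventually_gt_atTop 0] with j hj hj0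
    rw [not_le, div_lt_iff₀ (by positivity)] at hj
    rw [← log_le_iff_le_exp (hp j), ← neg_div]
    exact hj.le
  have hbigO : p =O[atTop] fun j : ℕ => exp (-(1 / β) * j ^ 2) :=
    .of_bound' (hev.mono fun j hj => by simpa [abs_of_pos (hp j)] using hj)
  obtain ⟨C, hC⟩ :=
    (Asymptotics.isBigO_nat_atTop_iff fun j h => absurd h (exp_ne_zero _)).1 hbigO
  have hβle := le_of_tendsto_log_tsum_div_sq hp hent hlim (one_div_pos.2 hβ)
    (C := C) fun j => by simpa [abs_of_pos (hp j)] using hC j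
  rw [mul_one_div, one_div_div] at hβle
  linarith

end

/-- Cauchy-estimate coefficient bound: if `f(z) = ∑ p_j z^j` is entire with positive
coefficients and `lim_{r→∞} ln f(r)/(ln r)² = β ∈ (0,∞)`, then
`limsup_{j→∞} (ln p_j)/j² ≤ -1/(4β)`. -/
theorem coeff_upper_bound (p : ℕ → ℝ) (hp : ∀ j, 0 < p j)
    (hent : ∀ r : ℝ, 0 < r → Summable (fun j : ℕ => p j * r ^ j))
    (β : ℝ) (hβ : 0 < β)
    (hlim : Tendsto (fun r : ℝ => Real.log (∑' j : ℕ, p j * r ^ j) / (Real.log r) ^ 2)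
      atTop (nhds β)) :
    limsup (fun j : ℕ => Real.log (p j) / (j : ℝ) ^ 2) atTop ≤ -1 / (4 * β) := by
  have hcobdd : IsCoboundedUnder (· ≤ ·) atTop fun j : ℕ => log (p j) / (j : ℝ) ^ 2 :=
    .of_frequently_ge (frequently_le_log_coeff_div_sq hp hent hβ hlim)
  have hbound (b : ℝ) (hb : β < b) :
      limsup (fun j : ℕ => log (p j) / (j : ℝ) ^ 2) atTop ≤ -1 / (4 * b) := by
    refine limsup_le_of_le hcobdd (eventually_log_coeff_div_sq_le hp hent (hβ.trans hb) ?_)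
    filter_upwards [hlim.eventually_lt_const hb, eventually_gt_atTop 1] with r hr hr1
    exact ((div_lt_iff₀ (pow_pos (log_pos hr1) 2)).1 hr).le
  have hcont : Tendsto (fun b : ℝ => -1 / (4 * b)) (𝓝[>] β) (𝓝 (-1 / (4 * β))) :=
    (tendsto_const_nhds.div (tendsto_const_nhds.mul tendsto_id) (by positivity)).mono_left
      nhdsWithin_le_nhds
  exact ge_of_tendsto hcont (eventually_nhdsWithin_of_forall hbound)
end

section
/- Let (p_j)_{j≥0} be a log-concave sequence of positive reals (p_j² ≥ p_{j-1} p_{j+1} for all j ≥ 1) such that f(z) = ∑ p_j z^j is entire with lim_{r→∞} ln f(r)/(ln r)² = β ∈ (0,∞). Then liminf_{j→∞} (ln p_j)/j² ≥ -1/(4β). -/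
open Filter Topology

/-!
Log-concavity makes the ratios `ρⱼ = pⱼ / pⱼ₊₁` nondecreasing, so `pⱼ rʲ` is the maximal term
of the series at `r = ρⱼ`, and `ρⱼ → ∞` because `f` is entire. Halving the radius, the series is
dominated by a geometric one: `f(ρⱼ / 2) ≤ 2 pⱼ ρⱼʲ`. For `c < β` and `j` large,
`f(ρⱼ / 2) > exp (c u²)` with `u = ln (ρⱼ / 2)`, hence `ln pⱼ > c u² - j u - (j + 1) ln 2`, and
minimising the quadratic in `u` gives `ln pⱼ ≥ -j² / (4c) - (j + 1) ln 2`. Let `c → β`.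
-/

lemma le_of_le_succ_of_succ_le {α : Type*} [Preorder α] {a : ℕ → α} {j : ℕ}
    (hup : ∀ i < j, a i ≤ a (i + 1)) (hdown : ∀ i ≥ j, a (i + 1) ≤ a i) (i : ℕ) :
    a i ≤ a j := by
  rcases le_total i j with hij | hji
  · refine monotoneOn_of_le_succ Set.ordConnected_Iic (fun n _ _ hn => ?_) hij le_rfl hij
    rw [Order.succ_eq_add_one, Set.mem_Iic] at *
    exact hup n hn
  · exact antitoneOn_nat_Ici_of_succ_le hdown (Set.mem_Ici.2 le_rfl) hji hji

lemma tsum_mul_half_pow_le {p : ℕ → ℝ} {R M : ℝ} (hp : ∀ i, 0 ≤ p i) (hR : 0 ≤ R)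
    (hM : ∀ i, p i * R ^ i ≤ M) : ∑' i, p i * (R / 2) ^ i ≤ 2 * M := by
  have hle : ∀ i, p i * (R / 2) ^ i ≤ M * (1 / 2) ^ i := fun i => by
    rw [div_pow, one_div_pow, ← mul_div_assoc, ← div_eq_mul_one_div]
    gcongr
    exact hM i
  have hgeom : Summable fun i : ℕ => M * (1 / 2 : ℝ) ^ i :=
    summable_geometric_two.mul_left M
  have hsum : Summable fun i => p i * (R / 2) ^ i :=
    hgeom.of_nonneg_of_le (fun i => mul_nonneg (hp i) (by positivity)) hle
  calc ∑' i, p i * (R / 2) ^ i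
      ≤ ∑' i : ℕ, M * (1 / 2 : ℝ) ^ i := hsum.tsum_le_tsum hle hgeom
    _ = 2 * M := by rw [tsum_mul_left, tsum_geometric_two, mul_comm]

lemma neg_sq_div_le_mul_sq_sub_mul {c : ℝ} (hc : 0 < c) (x u : ℝ) :
    -x ^ 2 / (4 * c) ≤ c * u ^ 2 - x * u := by
  rw [div_le_iff₀ (by positivity)]
  nlinarith [sq_nonneg (2 * c * u - x)]

lemma eventually_mul_lt_of_tendsto_div {ι : Type*} {l : Filter ι} {u v : ι → ℝ} {β c : ℝ}
    (h : Tendsto (fun x => u x / v x) l (𝓝 β)) (hv : ∀ x, 0 ≤ v x) (hc : 0 < c) (hcβ : c < β) :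
    ∀ᶠ x in l, c * v x < u x := by
  filter_upwards [h.eventually_const_lt hcβ] with x hx
  rcases (hv x).eq_or_lt with h0 | hpos
  · rw [← h0, div_zero] at hx
    linarith
  · rwa [lt_div_iff₀ hpos] at hx

section LogConcave

variable {p : ℕ → ℝ}

lemma monotone_div_succ_of_logConcave (hp : ∀ j, 0 < p j)
    (hlc : ∀ j : ℕ, 1 ≤ j → p (j - 1) * p (j + 1) ≤ p j ^ 2) :
    Monotone fun j => p j / p (j + 1) := by
  refine monotone_nat_of_le_succ fun j => ?_
  have h := hlc (j + 1) (Nat.le_add_left 1 j)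
  rw [Nat.add_sub_cancel] at h
  rw [div_le_div_iff₀ (hp _) (hp _)]
  linarith

lemma tendsto_div_succ_atTop (hp : ∀ j, 0 < p j) (hmono : Monotone fun j => p j / p (j + 1))
    (hent : ∀ r : ℝ, 0 < r → Summable fun j => p j * r ^ j) :
    Tendsto (fun j => p j / p (j + 1)) atTop atTop := by
  refine tendsto_atTop_atTop_of_monotone hmono fun b => ?_
  by_contra! hlt
  have hb : 0 < b := (div_pos (hp 0) (hp 1)).trans (hlt 0)
  -- bounded ratios make `p j * b ^ j` nondecreasing, so it cannot tend to zero
  have hterm : Monotone fun j => p j * b ^ j := monotone_nat_of_le_succ fun j => by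
    have hj := hlt j
    rw [div_lt_iff₀ (hp _)] at hj
    calc p j * b ^ j ≤ b * p (j + 1) * b ^ j := by gcongr
      _ = p (j + 1) * b ^ (j + 1) := by ring
  have hzero := (hent b hb).tendsto_atTop_zero
  obtain ⟨j, hj⟩ := (hzero.eventually (gt_mem_nhds (hp 0))).exists
  simpa using (hterm (Nat.zero_le j)).trans_lt hj

lemma mul_pow_le_of_monotone_div_succ (hp : ∀ j, 0 < p j)
    (hmono : Monotone fun j => p j / p (j + 1)) (i j : ℕ) :
    p i * (p j / p (j + 1)) ^ i ≤ p j * (p j / p (j + 1)) ^ j := by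
  set r := p j / p (j + 1)
  have hr : 0 < r := div_pos (hp _) (hp _)
  have hstep : ∀ k, p (k + 1) * r ^ (k + 1) = p k * r ^ k * (r / (p k / p (k + 1))) := fun k => by
    field_simp [(hp k).ne', (hp (k + 1)).ne']
    ring
  refine le_of_le_succ_of_succ_le (a := fun k => p k * r ^ k) (fun k hk => ?_) (fun k hk => ?_) i
  · rw [hstep]
    refine le_mul_of_one_le_right (mul_pos (hp k) (pow_pos hr k)).le ?_
    rw [one_le_div (div_pos (hp _) (hp _))]
    exact hmono hk.le
  · rw [hstep]
    refine mul_le_of_le_one_right (mul_pos (hp k) (pow_pos hr k)).le ?_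
    rw [div_le_one (div_pos (hp _) (hp _))]
    exact hmono hk

lemma neg_sq_div_sub_le_log_of_lt_log_tsum (hp : ∀ j, 0 < p j)
    (hmono : Monotone fun j => p j / p (j + 1)) {c : ℝ} (hc : 0 < c) (j : ℕ)
    (hgrowth : c * Real.log (p j / p (j + 1) / 2) ^ 2
      < Real.log (∑' i, p i * (p j / p (j + 1) / 2) ^ i)) :
    -(j : ℝ) ^ 2 / (4 * c) - (j + 1) * Real.log 2 ≤ Real.log (p j) := by
  set r := p j / p (j + 1)
  set F := ∑' i, p i * (r / 2) ^ i
  have hr : 0 < r := div_pos (hp _) (hp _)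
  have hF_le : F ≤ 2 * (p j * r ^ j) :=
    tsum_mul_half_pow_le (fun i => (hp i).le) hr.le (mul_pow_le_of_monotone_div_succ hp hmono · j)
  have hF_pos : 0 < F := by
    have h1 : 1 < F := (Real.log_pos_iff (tsum_nonneg fun i => by have := hp i; positivity)).1
      ((by positivity : 0 ≤ c * Real.log (r / 2) ^ 2).trans_lt hgrowth)
    linarith
  have hlogF : Real.log F ≤ Real.log 2 + Real.log (p j) + j * Real.log r := by
    calc Real.log F ≤ Real.log (2 * (p j * r ^ j)) := Real.log_le_log hF_pos hF_le
      _ = _ := by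
        rw [Real.log_mul (by norm_num) (by have := hp j; positivity),
          Real.log_mul (hp j).ne' (by positivity), Real.log_pow, add_assoc]
  have hlog_r : Real.log r = Real.log (r / 2) + Real.log 2 := by
    rw [Real.log_div hr.ne' two_ne_zero]
    ring
  have hquad := neg_sq_div_le_mul_sq_sub_mul hc (j : ℝ) (Real.log (r / 2))
  rw [hlog_r] at hlogF
  linarith

lemma isCoboundedUnder_ge_log_div_sq (hp : ∀ j, 0 < p j) (hsum : Summable p) :
    IsCoboundedUnder (· ≥ ·) atTop fun j : ℕ => Real.log (p j) / (j : ℝ) ^ 2 := by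
  refine (isBoundedUnder_of_eventually_le (a := 0) ?_).isCoboundedUnder_ge
  filter_upwards [hsum.tendsto_atTop_zero.eventually (eventually_le_nhds one_pos)] with j hj
  exact div_nonpos_of_nonpos_of_nonneg (Real.log_nonpos (hp j).le hj) (sq_nonneg _)

end LogConcave

lemma neg_inv_le_liminf_div_sq {q : ℕ → ℝ} {c C : ℝ} (hc : 0 < c) (hC : 0 ≤ C)
    (hbdd : IsCoboundedUnder (· ≥ ·) atTop fun j : ℕ => q j / (j : ℝ) ^ 2)
    (h : ∀ᶠ j : ℕ in atTop, -(j : ℝ) ^ 2 / (4 * c) - (j + 1) * C ≤ q j) :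
    -1 / (4 * c) ≤ liminf (fun j : ℕ => q j / (j : ℝ) ^ 2) atTop := by
  have hlim : Tendsto (fun j : ℕ => -1 / (4 * c) - 2 * C / j) atTop (𝓝 (-1 / (4 * c))) := by
    simpa using tendsto_const_nhds.sub (tendsto_const_div_atTop_nhds_zero_nat (2 * C))
  have hle : ∀ᶠ j : ℕ in atTop, -1 / (4 * c) - 2 * C / j ≤ q j / (j : ℝ) ^ 2 := by
    filter_upwards [h, eventually_ge_atTop 1] with j hj hj1
    have hj1 : (1 : ℝ) ≤ j := Nat.one_le_cast.2 hj1
    rw [le_div_iff₀ (by positivity)]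
    calc (-1 / (4 * c) - 2 * C / j) * (j : ℝ) ^ 2 = -(j : ℝ) ^ 2 / (4 * c) - 2 * j * C := by
          field_simp
      _ ≤ -(j : ℝ) ^ 2 / (4 * c) - (j + 1) * C := by nlinarith
      _ ≤ q j := hj
  calc -1 / (4 * c) = liminf (fun j : ℕ => -1 / (4 * c) - 2 * C / j) atTop := hlim.liminf_eq.symm
    _ ≤ _ := liminf_le_liminf hle hlim.isBoundedUnder_ge hbdd

/-- Log-concave coefficient lower bound: if `(p_j)` is positive log-concave,
`f(z) = ∑ p_j z^j` is entire and `lim_{r→∞} ln f(r)/(ln r)² = β ∈ (0,∞)`, then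
`liminf_{j→∞} (ln p_j)/j² ≥ -1/(4β)`. -/
theorem coeff_lower_bound (p : ℕ → ℝ) (hp : ∀ j, 0 < p j)
    (hlc : ∀ j : ℕ, 1 ≤ j → p (j - 1) * p (j + 1) ≤ (p j) ^ 2)
    (hent : ∀ r : ℝ, 0 < r → Summable (fun j : ℕ => p j * r ^ j))
    (β : ℝ) (hβ : 0 < β)
    (hlim : Tendsto (fun r : ℝ => Real.log (∑' j : ℕ, p j * r ^ j) / (Real.log r) ^ 2)
      atTop (nhds β)) :
    -1 / (4 * β) ≤ liminf (fun j : ℕ => Real.log (p j) / (j : ℝ) ^ 2) atTop := by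
  have hmono := monotone_div_succ_of_logConcave hp hlc
  have hradius : Tendsto (fun j => p j / p (j + 1) / 2) atTop atTop :=
    (tendsto_div_succ_atTop hp hmono hent).atTop_div_const two_pos
  have hbdd := isCoboundedUnder_ge_log_div_sq hp (by simpa using hent 1 one_pos)
  have hcont : Tendsto (fun c : ℝ => -1 / (4 * c)) (𝓝[<] β) (𝓝 (-1 / (4 * β))) :=
    tendsto_nhdsWithin_of_tendsto_nhds <| ContinuousAt.tendsto <|
      continuousAt_const.div (continuousAt_const.mul continuousAt_id) (mul_pos four_pos hβ).ne'
  refine le_of_tendsto hcont ?_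
  filter_upwards [Ioo_mem_nhdsLT hβ] with c ⟨hc, hcβ⟩
  have hgrowth :=
    hradius.eventually (eventually_mul_lt_of_tendsto_div hlim (fun r => sq_nonneg _) hc hcβ)
  exact neg_inv_le_liminf_div_sq hc (Real.log_pos one_lt_two).le hbdd
    (hgrowth.mono fun j hj => neg_sq_div_sub_le_log_of_lt_log_tsum hp hmono hc j hj)
end

section
/- Let X have a log-concave distribution on ℕ₀ with strictly positive probabilities p_j, whose probability generating function f is entire with lim_{r→∞} ln f(r)/(ln r)² = β ∈ (0,∞). If a > exp(1/(2β)), then there exists C > 0 with p_j ≥ C a^{-j(j-1)/2} for all j, and hence the distribution of Y = a^X admits a perturbation (Stieltjes class) and is moment-indeterminate. -/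
/-!
Log-concavity makes the ratios `r_N = p (N + 1) / p N` decrease, so `p j r_N ^ N ≤ p N r_N ^ j`
and hence `f (1 / (2 r_N)) ≤ 2 p N / r_N ^ N`. If `r_N < a⁻ᴺ` for arbitrarily large `N`, this
upper bound at the point `1 / (2 r_N) > aᴺ / 2` contradicts `ln f r ≈ β (ln r) ^ 2` together with
Cauchy's estimate `p N ≤ exp (-N ^ 2 / (4 β))`, because `β t ^ 2 - t + 1 / (4 β) > 0` at
`t = ln a > 1 / (2 β)`. So eventually `p (N + 1) ≥ a⁻ᴺ p N`, which integrates to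
`p j ≥ C a^(-j (j - 1) / 2)`.

The coefficients `c_j` of Euler's product `∏_{i ≥ 0} (1 - a⁻ⁱ x)` are `O(a^(-j (j - 1) / 2))`,
hence `O(p j)`, and their generating function vanishes at every `x = aᵏ`. Suitable multiples of
`c_j / p j` and of `c_j` give the perturbation and a second law with the moments of `p`.
-/

open Filter Finset Topology

noncomputable def succRatio (p : ℕ → ℝ) (n : ℕ) : ℝ := p (n + 1) / p n

section LogConcave

variable {p : ℕ → ℝ}

lemma succRatio_pos (hp : ∀ j, 0 < p j) (n : ℕ) : 0 < succRatio p n :=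
  div_pos (hp _) (hp _)

lemma antitone_succRatio (hp : ∀ j, 0 < p j) (hlc : ∀ j, p j * p (j + 2) ≤ p (j + 1) ^ 2) :
    Antitone (succRatio p) := by
  refine antitone_nat_of_succ_le fun n => ?_
  rw [succRatio, succRatio, div_le_div_iff₀ (hp _) (hp _)]
  linarith [hlc n]

lemma div_succRatio_pow_le (hp : ∀ j, 0 < p j) (hr : Antitone (succRatio p)) (N j : ℕ) :
    p j / succRatio p N ^ j ≤ p N / succRatio p N ^ N := by
  set r := succRatio p N
  have hr0 : 0 < r := succRatio_pos hp N
  have hstep (i : ℕ) : p (i + 1) / r ^ (i + 1) = p i / r ^ i * (succRatio p i / r) := by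
    rw [succRatio, pow_succ]
    field_simp [(hp i).ne']
  have hnonneg (i : ℕ) : 0 ≤ p i / r ^ i := div_nonneg (hp i).le (pow_nonneg hr0.le i)
  rcases le_total j N with hj | hj
  · refine monotoneOn_of_le_add_one (f := fun i => p i / r ^ i) (s := Set.Iic N)
      Set.ordConnected_Iic (fun i _ hi _ => ?_) hj Set.self_mem_Iic hj
    rw [hstep]
    exact le_mul_of_one_le_right (hnonneg i) ((one_le_div hr0).2 (hr (Set.mem_Iic.1 hi)))
  · refine antitoneOn_nat_Ici_of_succ_le (f := fun i => p i / r ^ i)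
      (fun i hi => ?_) Set.self_mem_Ici hj hj
    rw [hstep]
    exact mul_le_of_le_one_right (hnonneg i) ((div_le_one hr0).2 (hr hi))

lemma tsum_mul_inv_two_succRatio_pow_le (hp : ∀ j, 0 < p j) (hr : Antitone (succRatio p))
    (N : ℕ) (hsum : Summable fun j => p j * (2 * succRatio p N)⁻¹ ^ j) :
    ∑' j, p j * (2 * succRatio p N)⁻¹ ^ j ≤ 2 * (p N / succRatio p N ^ N) := by
  have hterm (j : ℕ) :
      p j * (2 * succRatio p N)⁻¹ ^ j ≤ p N / succRatio p N ^ N * (1 / 2) ^ j := by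
    calc p j * (2 * succRatio p N)⁻¹ ^ j = p j / succRatio p N ^ j * (1 / 2) ^ j := by
          rw [mul_inv, mul_pow, div_eq_mul_inv, ← inv_pow, one_div]; ring
      _ ≤ _ := mul_le_mul_of_nonneg_right (div_succRatio_pow_le hp hr N j) (by positivity)
  calc ∑' j, p j * (2 * succRatio p N)⁻¹ ^ j
      ≤ ∑' j, p N / succRatio p N ^ N * (1 / 2 : ℝ) ^ j :=
        hsum.tsum_le_tsum hterm (summable_geometric_two.mul_left _)
    _ = 2 * (p N / succRatio p N ^ N) := by rw [tsum_mul_left, tsum_geometric_two, mul_comm]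

end LogConcave

theorem exists_pos_mul_inv_pow_le_of_eventually {p : ℕ → ℝ} {a : ℝ} (hp : ∀ j, 0 < p j)
    (ha : 0 < a) (h : ∀ᶠ N in atTop, p N / a ^ N ≤ p (N + 1)) :
    ∃ C > 0, ∀ j : ℕ, C * (a ^ (j * (j - 1) / 2))⁻¹ ≤ p j := by
  obtain ⟨J, hJ⟩ := eventually_atTop.1 h
  set g := fun j : ℕ => p j * a ^ (j * (j - 1) / 2)
  have hmono : MonotoneOn g (Set.Ici J) := monotoneOn_nat_Ici_of_le_succ fun n hn => by
    have hn' := hJ n hn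
    rw [div_le_iff₀ (pow_pos ha n)] at hn'
    simp only [g, Nat.triangle_succ, pow_add]
    calc p n * a ^ (n * (n - 1) / 2) ≤ p (n + 1) * a ^ n * a ^ (n * (n - 1) / 2) := by gcongr
      _ = _ := by ring
  set C := (range (J + 1)).inf' nonempty_range_add_one g
  have hC : 0 < C := (lt_inf'_iff _).2 fun i _ => mul_pos (hp i) (pow_pos ha _)
  refine ⟨C, hC, fun j => ?_⟩
  have hCg : C ≤ g j := by
    rcases le_or_gt j J with hj | hj
    · exact inf'_le _ (mem_range.2 (Nat.lt_succ_of_le hj))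
    · exact (inf'_le _ (mem_range.2 J.lt_succ_self)).trans
        (hmono Set.self_mem_Ici (Set.mem_Ici.2 hj.le) hj.le)
  rw [← div_eq_mul_inv, div_le_iff₀ (pow_pos ha _)]
  exact hCg

section Growth

lemma eventually_mul_log_sq_le_of_tendsto {g : ℝ → ℝ} {β b : ℝ}
    (h : Tendsto (fun r => g r / Real.log r ^ 2) atTop (𝓝 β)) (hb : b < β) :
    ∀ᶠ r in atTop, b * Real.log r ^ 2 ≤ g r := by
  filter_upwards [h.eventually (eventually_gt_nhds hb), eventually_gt_atTop 1] with r hr h1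
  have : 0 < Real.log r ^ 2 := by have := Real.log_pos h1; positivity
  exact ((lt_div_iff₀ this).1 hr).le

lemma eventually_le_mul_log_sq_of_tendsto {g : ℝ → ℝ} {β B : ℝ}
    (h : Tendsto (fun r => g r / Real.log r ^ 2) atTop (𝓝 β)) (hB : β < B) :
    ∀ᶠ r in atTop, g r ≤ B * Real.log r ^ 2 := by
  filter_upwards [h.eventually (eventually_lt_nhds hB), eventually_gt_atTop 1] with r hr h1
  have : 0 < Real.log r ^ 2 := by have := Real.log_pos h1; positivity
  exact ((div_lt_iff₀ this).1 hr).le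

/-- Cauchy's estimate `p N ≤ f r / r ^ N`, taken at the radius `r = exp (N / (2 B))` that
minimises `B (log r) ^ 2 - N log r`. -/
theorem eventually_le_exp_neg_sq_of_log_tsum_le {p : ℕ → ℝ} {B : ℝ} (hp : ∀ j, 0 ≤ p j)
    (hB : 0 < B) (hent : ∀ r : ℝ, 0 < r → Summable fun j => p j * r ^ j)
    (hup : ∀ᶠ r in atTop, Real.log (∑' j, p j * r ^ j) ≤ B * Real.log r ^ 2) :
    ∀ᶠ N : ℕ in atTop, p N ≤ Real.exp (-((4 * B)⁻¹ * N ^ 2)) := by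
  have hr : Tendsto (fun N : ℕ => Real.exp (N / (2 * B))) atTop atTop :=
    Real.tendsto_exp_atTop.comp (tendsto_natCast_atTop_atTop.atTop_div_const (by positivity))
  filter_upwards [hr.eventually hup] with N hN
  set r := Real.exp (N / (2 * B))
  have hr0 : 0 < r := Real.exp_pos _
  have hcoef : p N * r ^ N ≤ ∑' j, p j * r ^ j :=
    (hent r hr0).le_tsum N fun j _ => mul_nonneg (hp j) (pow_nonneg hr0.le j)
  have hf : ∑' j, p j * r ^ j ≤ Real.exp (B * (N / (2 * B)) ^ 2) := by
    rw [← Real.log_exp (N / (2 * B))]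
    exact (Real.le_exp_log _).trans (Real.exp_le_exp.2 hN)
  have hrN : r ^ N = Real.exp (N * (N / (2 * B))) := (Real.exp_nat_mul _ _).symm
  calc p N ≤ Real.exp (B * (N / (2 * B)) ^ 2) / r ^ N :=
        (le_div_iff₀ (pow_pos hr0 N)).2 (hcoef.trans hf)
    _ = Real.exp (-((4 * B)⁻¹ * N ^ 2)) := by
        rw [hrN, ← Real.exp_sub]
        congr 1
        field_simp
        ring

/-- If `s ≥ N A` then `b (s - L) ^ 2 - N s + c N ^ 2 - L`, a convex function of `s`, is
increasing from `s = N A`, where it is `N ^ 2 (b A ^ 2 - A + c) + O(N)`. -/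
theorem eventually_lt_mul_sub_sq {A b c L : ℝ} (hb : 0 ≤ b) (hslope : 1 < 2 * b * A)
    (hvalue : 0 < b * A ^ 2 - A + c) :
    ∀ᶠ N : ℕ in atTop, ∀ s : ℝ, N * A ≤ s → L - c * N ^ 2 + N * s < b * (s - L) ^ 2 := by
  have hN := tendsto_natCast_atTop_atTop (R := ℝ)
  filter_upwards [hN.eventually_ge_atTop 1,
    hN.eventually_ge_atTop (2 * b * L / (2 * b * A - 1)),
    hN.eventually_ge_atTop ((|2 * b * A * L| + |L| + 1) / (b * A ^ 2 - A + c))]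
    with N h1 hlin hquad s hs
  rw [div_le_iff₀ (by linarith)] at hlin
  rw [div_le_iff₀ hvalue] at hquad
  have hsq : 0 ≤ b * (s - N * A) ^ 2 := by positivity
  have hincr : 0 ≤ (2 * b * (N * A - L) - N) * (s - N * A) :=
    mul_nonneg (by linarith) (by linarith)
  have hbase : 0 < b * (N * A - L) ^ 2 - A * N ^ 2 + c * N ^ 2 - L := by
    nlinarith [mul_le_mul_of_nonneg_left hquad (by linarith : (0 : ℝ) ≤ N),
      mul_le_mul_of_nonneg_left (le_abs_self (2 * b * A * L)) (by linarith : (0 : ℝ) ≤ N),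
      mul_le_mul_of_nonneg_left h1 (abs_nonneg L), le_abs_self L, mul_nonneg hb (sq_nonneg L)]
  linarith [hsq, hincr, hbase]

end Growth

theorem eventually_div_pow_le_succ {p : ℕ → ℝ} {a b c : ℝ} (hp : ∀ j, 0 < p j)
    (hr : Antitone (succRatio p)) (hent : ∀ r : ℝ, 0 < r → Summable fun j => p j * r ^ j)
    (hlow : ∀ᶠ r in atTop, b * Real.log r ^ 2 ≤ Real.log (∑' j, p j * r ^ j))
    (hcoef : ∀ᶠ N : ℕ in atTop, p N ≤ Real.exp (-(c * N ^ 2)))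
    (ha : 1 < a) (hslope : 1 < 2 * b * Real.log a)
    (hvalue : 0 < b * Real.log a ^ 2 - Real.log a + c) :
    ∀ᶠ N : ℕ in atTop, p N / a ^ N ≤ p (N + 1) := by
  have hb : 0 ≤ b := by
    by_contra! hb
    nlinarith [Real.log_pos ha]
  obtain ⟨R, hR⟩ := eventually_atTop.1 hlow
  filter_upwards [hcoef, eventually_lt_mul_sub_sq (L := Real.log 2) hb hslope hvalue,
    (tendsto_pow_atTop_atTop_of_one_lt ha).eventually_ge_atTop (2 * R)] with N hpN hcontra haN
  by_contra! hlt
  -- evaluate the lower growth bound at `x = 1 / (2 r)`, where `f x ≤ 2 p N / r ^ N`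
  set r := succRatio p N
  have hr0 : 0 < r := succRatio_pos hp N
  have hrlt : r < (a ^ N)⁻¹ := by
    show p (N + 1) / p N < _
    rwa [div_lt_iff₀ (hp N), ← div_eq_inv_mul]
  set x := (2 * r)⁻¹
  have hx0 : 0 < x := by positivity
  have hxR : R ≤ x :=
    calc R ≤ (2 * (a ^ N)⁻¹)⁻¹ := by rw [mul_inv, inv_inv]; linarith
      _ ≤ x := inv_anti₀ (by positivity) (by linarith)
  set s := -Real.log r
  have hs : N * Real.log a ≤ s := by
    have := Real.log_lt_log hr0 hrlt
    rw [Real.log_inv, Real.log_pow] at this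
    linarith
  have hlogx : Real.log x = s - Real.log 2 := by
    rw [Real.log_inv, Real.log_mul two_ne_zero hr0.ne']
    ring
  have hfpos : 0 < ∑' j, p j * x ^ j :=
    (hent x hx0).tsum_pos (fun j => (mul_pos (hp j) (pow_pos hx0 j)).le) 0
      (by simpa using hp 0)
  have hlogpN : Real.log (p N) ≤ -(c * N ^ 2) := by
    simpa using Real.log_le_log (hp N) hpN
  have hlogf : Real.log (∑' j, p j * x ^ j) ≤ Real.log 2 - c * N ^ 2 + N * s :=
    calc Real.log (∑' j, p j * x ^ j) ≤ Real.log (2 * (p N / r ^ N)) :=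
          Real.log_le_log hfpos (tsum_mul_inv_two_succRatio_pow_le hp hr N (hent x hx0))
      _ = Real.log 2 + Real.log (p N) - N * Real.log r := by
          rw [Real.log_mul two_ne_zero (div_pos (hp N) (pow_pos hr0 N)).ne',
            Real.log_div (hp N).ne' (pow_pos hr0 N).ne', Real.log_pow]
          ring
      _ ≤ _ := by linarith
  have hlowx := hR x hxR
  rw [hlogx] at hlowx
  exact (hcontra s hs).not_ge (hlowx.trans hlogf)

/-- Both inequalities hold at `b = B = β`, since `β A ^ 2 - A + (4 β)⁻¹ = (2 β A - 1) ^ 2 / (4 β)`,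
and survive small perturbations of `β`. -/
lemma exists_bracket_quadratic_pos {β A : ℝ} (hβ : 0 < β) (hA : 1 < 2 * β * A) :
    ∃ b B, b < β ∧ β < B ∧ 1 < 2 * b * A ∧ 0 < b * A ^ 2 - A + (4 * B)⁻¹ := by
  have hlim : (0 : ℝ) < β * A ^ 2 - A + (4 * β)⁻¹ := by
    have : β * A ^ 2 - A + (4 * β)⁻¹ = (2 * β * A - 1) ^ 2 / (4 * β) := by field_simp; ring
    rw [this]
    have : 0 < 2 * β * A - 1 := by linarith
    positivity
  have h1 : ∀ᶠ ε in 𝓝 (0 : ℝ), 1 < 2 * (β - ε) * A :=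
    continuousAt_const.eventually_lt (by fun_prop) (by simpa using hA)
  have h2 : ∀ᶠ ε in 𝓝 (0 : ℝ), 0 < (β - ε) * A ^ 2 - A + (4 * (β + ε))⁻¹ :=
    continuousAt_const.eventually_lt (by fun_prop (disch := simp [hβ.ne'])) (by simpa using hlim)
  obtain ⟨ε, ⟨h1, h2⟩, hε⟩ :=
    (((h1.and h2).filter_mono nhdsWithin_le_nhds).and (self_mem_nhdsWithin (s := Set.Ioi 0))).exists
  exact ⟨β - ε, β + ε, by linarith, by linarith, h1, h2⟩

theorem exists_pos_mul_inv_pow_le_of_tendsto {p : ℕ → ℝ} {β a : ℝ} (hp : ∀ j, 0 < p j)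
    (hr : Antitone (succRatio p)) (hent : ∀ r : ℝ, 0 < r → Summable fun j => p j * r ^ j)
    (hβ : 0 < β)
    (hlim : Tendsto (fun r : ℝ => Real.log (∑' j : ℕ, p j * r ^ j) / (Real.log r) ^ 2)
      atTop (𝓝 β))
    (ha : Real.exp (1 / (2 * β)) < a) :
    ∃ C > 0, ∀ j : ℕ, C * (a ^ (j * (j - 1) / 2))⁻¹ ≤ p j := by
  have ha1 : 1 < a := (Real.one_lt_exp_iff.2 (by positivity)).trans ha
  have hA : 1 < 2 * β * Real.log a := by
    have := Real.log_lt_log (Real.exp_pos _) ha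
    rw [Real.log_exp, div_lt_iff₀ (by positivity)] at this
    linarith
  obtain ⟨b, B, hbβ, hβB, hslope, hvalue⟩ := exists_bracket_quadratic_pos hβ hA
  have hcoef := eventually_le_exp_neg_sq_of_log_tsum_le (fun j => (hp j).le) (hβ.trans hβB) hent
    (eventually_le_mul_log_sq_of_tendsto hlim hβB)
  exact exists_pos_mul_inv_pow_le_of_eventually hp (zero_lt_one.trans ha1)
    (eventually_div_pow_le_succ hp hr hent (eventually_mul_log_sq_le_of_tendsto hlim hbβ) hcoef
      ha1 hslope hvalue)

/-- `∏_{i ≥ 0} (1 - qⁱ x) = ∑_j eulerCoeff q j * x ^ j` (Euler). -/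
noncomputable def eulerCoeff (q : ℝ) (j : ℕ) : ℝ :=
  (-1) ^ j * q ^ (j * (j - 1) / 2) / ∏ i ∈ range j, (1 - q ^ (i + 1))

section EulerCoeff

variable {q : ℝ}

lemma one_sub_pow_succ_pos (hq0 : 0 ≤ q) (hq1 : q < 1) (i : ℕ) : 0 < 1 - q ^ (i + 1) :=
  sub_pos.2 (pow_lt_one₀ hq0 hq1 i.succ_ne_zero)

@[simp]
lemma eulerCoeff_zero (q : ℝ) : eulerCoeff q 0 = 1 := by
  simp [eulerCoeff]

lemma eulerCoeff_succ_mul (hq0 : 0 ≤ q) (hq1 : q < 1) (j : ℕ) :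
    eulerCoeff q (j + 1) * (1 - q ^ (j + 1)) = -(q ^ j * eulerCoeff q j) := by
  have hP : ∏ i ∈ range j, (1 - q ^ (i + 1)) ≠ 0 :=
    (prod_pos fun i _ => one_sub_pow_succ_pos hq0 hq1 i).ne'
  have hj := (one_sub_pow_succ_pos hq0 hq1 j).ne'
  rw [eulerCoeff, eulerCoeff, prod_range_succ, Nat.triangle_succ, pow_add, pow_succ (-1 : ℝ)]
  field_simp
  ring

lemma exp_neg_le_prod_one_sub_pow (hq0 : 0 ≤ q) (hq1 : q < 1) (j : ℕ) :
    Real.exp (-(q / (1 - q) ^ 2)) ≤ ∏ i ∈ range j, (1 - q ^ (i + 1)) := by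
  have hq : 0 < 1 - q := sub_pos.2 hq1
  -- `log (1 - t) ≥ 1 - (1 - t)⁻¹ = -t / (1 - t) ≥ -t / (1 - q)` for `0 ≤ t ≤ q`
  have hfactor (i : ℕ) : Real.exp (-(q ^ (i + 1) / (1 - q))) ≤ 1 - q ^ (i + 1) := by
    have hpos := one_sub_pow_succ_pos hq0 hq1 i
    have hle : q ^ (i + 1) ≤ q := pow_le_of_le_one hq0 hq1.le i.succ_ne_zero
    have hlog := Real.one_sub_inv_le_log_of_pos hpos
    have hdiv : q ^ (i + 1) / (1 - q ^ (i + 1)) ≤ q ^ (i + 1) / (1 - q) :=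
      div_le_div_of_nonneg_left (by positivity) hq (by linarith)
    have hid : 1 - (1 - q ^ (i + 1))⁻¹ = -(q ^ (i + 1) / (1 - q ^ (i + 1))) := by
      field_simp; ring
    rw [← Real.exp_log hpos, Real.exp_le_exp]
    linarith
  have hgeom : ∑ i ∈ range j, q ^ (i + 1) ≤ q / (1 - q) := by
    simpa [sum_Ico_eq_sum_range, add_comm] using
      geom_sum_Ico_le_of_lt_one (m := 1) (n := j + 1) hq0 hq1
  calc Real.exp (-(q / (1 - q) ^ 2))
      ≤ Real.exp (∑ i ∈ range j, -(q ^ (i + 1) / (1 - q))) := by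
        rw [Real.exp_le_exp, sum_neg_distrib, ← sum_div, neg_le_neg_iff, pow_two, ← div_div]
        gcongr
    _ = ∏ i ∈ range j, Real.exp (-(q ^ (i + 1) / (1 - q))) := Real.exp_sum _ _
    _ ≤ ∏ i ∈ range j, (1 - q ^ (i + 1)) :=
        prod_le_prod (fun _ _ => (Real.exp_pos _).le) fun i _ => hfactor i

lemma abs_eulerCoeff_le (hq0 : 0 ≤ q) (hq1 : q < 1) (j : ℕ) :
    |eulerCoeff q j| ≤ Real.exp (q / (1 - q) ^ 2) * q ^ (j * (j - 1) / 2) := by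
  have hP := exp_neg_le_prod_one_sub_pow hq0 hq1 j
  have hPpos : 0 < ∏ i ∈ range j, (1 - q ^ (i + 1)) := (Real.exp_pos _).trans_le hP
  rw [eulerCoeff, abs_div, abs_mul, abs_pow, abs_neg, abs_one, one_pow, one_mul,
    abs_of_nonneg (pow_nonneg hq0 _), abs_of_pos hPpos, div_le_iff₀ hPpos]
  have hexp : 1 ≤ Real.exp (q / (1 - q) ^ 2) * ∏ i ∈ range j, (1 - q ^ (i + 1)) := by
    calc (1 : ℝ) = Real.exp (q / (1 - q) ^ 2) * Real.exp (-(q / (1 - q) ^ 2)) := by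
          rw [← Real.exp_add, add_neg_cancel, Real.exp_zero]
      _ ≤ _ := by gcongr
  exact (le_mul_of_one_le_right (pow_nonneg hq0 _) hexp).trans_eq (by ring)

lemma abs_eulerCoeff_succ_le (hq0 : 0 ≤ q) (hq1 : q < 1) (j : ℕ) :
    |eulerCoeff q (j + 1)| * (1 - q) ≤ q ^ j * |eulerCoeff q j| := by
  have hrec := congrArg abs (eulerCoeff_succ_mul hq0 hq1 j)
  rw [abs_mul, abs_neg, abs_mul, abs_of_pos (one_sub_pow_succ_pos hq0 hq1 j),
    abs_of_nonneg (pow_nonneg hq0 j)] at hrec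
  rw [← hrec]
  gcongr
  exact pow_le_of_le_one hq0 hq1.le j.succ_ne_zero

lemma summable_eulerCoeff_mul_pow (hq0 : 0 ≤ q) (hq1 : q < 1) (x : ℝ) :
    Summable fun j => eulerCoeff q j * x ^ j := by
  have hq : 0 < 1 - q := sub_pos.2 hq1
  have hsmall : Tendsto (fun j => q ^ j * |x| / (1 - q)) atTop (𝓝 0) := by
    simpa using
      ((tendsto_pow_atTop_nhds_zero_of_lt_one hq0 hq1).mul_const |x|).div_const (1 - q)
  refine summable_of_ratio_norm_eventually_le (by norm_num : (1 / 2 : ℝ) < 1) ?_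
  filter_upwards [hsmall.eventually (ge_mem_nhds (by norm_num : (0 : ℝ) < 1 / 2))] with j hj
  rw [div_le_iff₀ hq] at hj
  have hc := abs_eulerCoeff_succ_le hq0 hq1 j
  simp only [norm_mul, norm_pow, Real.norm_eq_abs, pow_succ]
  have key : |eulerCoeff q (j + 1)| * |x| ≤ 1 / 2 * |eulerCoeff q j| := by
    refine le_of_mul_le_mul_right ?_ hq
    calc |eulerCoeff q (j + 1)| * |x| * (1 - q) = |eulerCoeff q (j + 1)| * (1 - q) * |x| := by ring
      _ ≤ q ^ j * |eulerCoeff q j| * |x| := by gcongr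
      _ = q ^ j * |x| * |eulerCoeff q j| := by ring
      _ ≤ 1 / 2 * (1 - q) * |eulerCoeff q j| := by gcongr
      _ = 1 / 2 * |eulerCoeff q j| * (1 - q) := by ring
  calc |eulerCoeff q (j + 1)| * (|x| ^ j * |x|) = |eulerCoeff q (j + 1)| * |x| * |x| ^ j := by ring
    _ ≤ 1 / 2 * |eulerCoeff q j| * |x| ^ j := by gcongr
    _ = 1 / 2 * (|eulerCoeff q j| * |x| ^ j) := by ring

lemma tsum_eulerCoeff_mul_pow_eq (hq0 : 0 ≤ q) (hq1 : q < 1) (x : ℝ) :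
    ∑' j, eulerCoeff q j * x ^ j = (1 - x) * ∑' j, eulerCoeff q j * (q * x) ^ j := by
  have hx := summable_eulerCoeff_mul_pow hq0 hq1 x
  have hqx := summable_eulerCoeff_mul_pow hq0 hq1 (q * x)
  have hshift (j : ℕ) :
      eulerCoeff q (j + 1) * x ^ (j + 1) - eulerCoeff q (j + 1) * (q * x) ^ (j + 1)
        = -(x * (eulerCoeff q j * (q * x) ^ j)) := by
    calc _ = eulerCoeff q (j + 1) * (1 - q ^ (j + 1)) * x ^ (j + 1) := by ring
      _ = _ := by rw [eulerCoeff_succ_mul hq0 hq1 j]; ring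
  have hdiff : ∑' j, (eulerCoeff q j * x ^ j - eulerCoeff q j * (q * x) ^ j)
      = -(x * ∑' j, eulerCoeff q j * (q * x) ^ j) := by
    rw [(hx.sub hqx).tsum_eq_zero_add, tsum_congr hshift, tsum_neg, tsum_mul_left]
    simp
  rw [hx.tsum_sub hqx] at hdiff
  linear_combination hdiff

/-- The functional equation moves the zero at `x = 1` to every `x = q⁻ᵏ`. -/
lemma tsum_eulerCoeff_mul_inv_pow_pow (hq0 : 0 < q) (hq1 : q < 1) (k : ℕ) :
    ∑' j, eulerCoeff q j * ((q ^ k)⁻¹) ^ j = 0 := by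
  induction k with
  | zero => simpa using tsum_eulerCoeff_mul_pow_eq hq0.le hq1 1
  | succ k ih =>
    have hstep : q * (q ^ (k + 1))⁻¹ = (q ^ k)⁻¹ := by
      rw [pow_succ]; field_simp
    rw [tsum_eulerCoeff_mul_pow_eq hq0.le hq1, hstep, ih, mul_zero]

end EulerCoeff

theorem exists_zero_moments_abs_le {p : ℕ → ℝ} {a C : ℝ} (ha : 1 < a) (hC : 0 < C)
    (hCp : ∀ j : ℕ, C * (a ^ (j * (j - 1) / 2))⁻¹ ≤ p j) :
    ∃ u : ℕ → ℝ, u ≠ 0 ∧ (∀ j, |u j| ≤ p j) ∧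
      ∀ k : ℕ, Summable (fun j => u j * (a ^ k) ^ j) ∧ ∑' j, u j * (a ^ k) ^ j = 0 := by
  set q := a⁻¹
  have hq0 : 0 < q := inv_pos.2 (zero_lt_one.trans ha)
  have hq1 : q < 1 := inv_lt_one_of_one_lt₀ ha
  set K := Real.exp (q / (1 - q) ^ 2)
  have hK : 0 < K := Real.exp_pos _
  have hak (k : ℕ) : a ^ k = (q ^ k)⁻¹ := by rw [inv_pow, inv_inv]
  refine ⟨fun j => C / K * eulerCoeff q j, fun hu => ?_, fun j => ?_, fun k => ?_⟩
  · have := congrFun hu 0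
    simp only [eulerCoeff_zero, mul_one, Pi.zero_apply] at this
    exact (div_pos hC hK).ne' this
  · calc |C / K * eulerCoeff q j| = C / K * |eulerCoeff q j| := by
          rw [abs_mul, abs_of_pos (div_pos hC hK)]
      _ ≤ C / K * (K * q ^ (j * (j - 1) / 2)) := by
          gcongr; exact abs_eulerCoeff_le hq0.le hq1 j
      _ = C * q ^ (j * (j - 1) / 2) := by field_simp
      _ = C * (a ^ (j * (j - 1) / 2))⁻¹ := by rw [inv_pow]
      _ ≤ p j := hCp j
  · simp only [mul_assoc, hak]
    exact ⟨(summable_eulerCoeff_mul_pow hq0.le hq1 _).mul_left _, by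
      rw [tsum_mul_left, tsum_eulerCoeff_mul_inv_pow_pow hq0 hq1, mul_zero]⟩

theorem exists_perturbation_of_zero_moments {p u : ℕ → ℝ} {a : ℝ} (hp : ∀ j, 0 < p j)
    (hu : u ≠ 0) (hup : ∀ j, |u j| ≤ p j)
    (hmom : ∀ k : ℕ, Summable (fun j => u j * (a ^ k) ^ j) ∧ ∑' j, u j * (a ^ k) ^ j = 0) :
    ∃ h : ℕ → ℝ, h ≠ 0 ∧ (⨆ j : ℕ, |h j|) = 1 ∧
      ∀ k : ℕ, Summable (fun j : ℕ => |a ^ (k * j) * p j * h j|) ∧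
        (∑' j : ℕ, a ^ (k * j) * p j * h j) = 0 := by
  set v := fun j => u j / p j
  set s := ⨆ j, |v j|
  have hbdd : BddAbove (Set.range fun j => |v j|) := by
    refine ⟨1, ?_⟩
    rintro _ ⟨j, rfl⟩
    show |u j / p j| ≤ 1
    rw [abs_div, abs_of_pos (hp j)]
    exact div_le_one_of_le₀ (hup j) (hp j).le
  obtain ⟨j₀, hj₀⟩ := Function.ne_iff.1 hu
  have hs : 0 < s := by
    refine lt_of_lt_of_le ?_ (le_ciSup hbdd j₀)
    exact abs_pos.2 (div_ne_zero hj₀ (hp j₀).ne')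
  have hterm (k j : ℕ) : a ^ (k * j) * p j * (v j * s⁻¹) = u j * (a ^ k) ^ j * s⁻¹ := by
    simp only [v, pow_mul]
    field_simp [(hp j).ne']
  refine ⟨fun j => v j * s⁻¹, fun h => ?_, ?_, fun k => ⟨?_, ?_⟩⟩
  · have := congrFun h j₀
    simp only [Pi.zero_apply, mul_eq_zero, inv_eq_zero, hs.ne', or_false, v] at this
    exact div_ne_zero hj₀ (hp j₀).ne' this
  · simp only [abs_mul, abs_inv, abs_of_pos hs]
    rw [← Real.iSup_mul_of_nonneg (inv_nonneg.2 hs.le), mul_inv_cancel₀ hs.ne']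
  · simp only [hterm]
    exact ((hmom k).1.mul_right _).abs
  · simp only [hterm]
    rw [tsum_mul_right, (hmom k).2, zero_mul]

theorem exists_ne_with_same_moments {p u : ℕ → ℝ} {a : ℝ}
    (hpsum : ∑' j, p j = 1) (hpa : ∀ k : ℕ, Summable fun j => p j * (a ^ k) ^ j)
    (hu : u ≠ 0) (hup : ∀ j, |u j| ≤ p j)
    (hmom : ∀ k : ℕ, Summable (fun j => u j * (a ^ k) ^ j) ∧ ∑' j, u j * (a ^ k) ^ j = 0) :
    ∃ p' : ℕ → ℝ, (∀ j, 0 ≤ p' j) ∧ (∑' j, p' j) = 1 ∧ p' ≠ p ∧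
      ∀ k : ℕ, (∑' j : ℕ, a ^ (k * j) * p' j) = ∑' j : ℕ, a ^ (k * j) * p j := by
  have hmoment (k : ℕ) : ∑' j, a ^ (k * j) * (p j + u j) = ∑' j, a ^ (k * j) * p j := by
    have hsplit (j : ℕ) : a ^ (k * j) * (p j + u j) = p j * (a ^ k) ^ j + u j * (a ^ k) ^ j := by
      rw [pow_mul]; ring
    rw [tsum_congr hsplit, (hpa k).tsum_add (hmom k).1, (hmom k).2, add_zero]
    exact tsum_congr fun j => by rw [pow_mul, mul_comm]
  refine ⟨fun j => p j + u j, fun j => ?_, ?_, fun h => hu ?_, hmoment⟩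
  · linarith [neg_abs_le (u j), hup j]
  · simpa [hpsum] using hmoment 0
  · funext j
    simpa using congrFun h j

/-- Log-concave case, supercritical `a`: if `X` has a positive log-concave pmf `p` whose
generating function is entire with `lim ln f(r)/(ln r)² = β ∈ (0,∞)` and
`a > exp(1/(2β))`, then `p_j ≥ C a^{-j(j-1)/2}` for some `C > 0`, and hence the law of
`Y = a^X` admits a perturbation (Stieltjes class) and is moment-indeterminate. -/
theorem log_concave_stieltjes_exists (p : ℕ → ℝ) (hp : ∀ j, 0 < p j)
    (hpsum : ∑' j, p j = 1)
    (hlc : ∀ j : ℕ, 1 ≤ j → p (j - 1) * p (j + 1) ≤ (p j) ^ 2)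
    (hent : ∀ r : ℝ, 0 < r → Summable (fun j : ℕ => p j * r ^ j))
    (β : ℝ) (hβ : 0 < β)
    (hlim : Tendsto (fun r : ℝ => Real.log (∑' j : ℕ, p j * r ^ j) / (Real.log r) ^ 2)
      atTop (nhds β))
    (a : ℝ) (ha : Real.exp (1 / (2 * β)) < a) :
    (∃ C > (0 : ℝ), ∀ j : ℕ, C * (a ^ (j * (j - 1) / 2))⁻¹ ≤ p j) ∧
    (∃ h : ℕ → ℝ, h ≠ 0 ∧ (⨆ j : ℕ, |h j|) = 1 ∧
      ∀ k : ℕ, Summable (fun j : ℕ => |a ^ (k * j) * p j * h j|) ∧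
        (∑' j : ℕ, a ^ (k * j) * p j * h j) = 0) ∧
    (∃ p' : ℕ → ℝ, (∀ j, 0 ≤ p' j) ∧ (∑' j, p' j) = 1 ∧ p' ≠ p ∧
      ∀ k : ℕ, (∑' j : ℕ, a ^ (k * j) * p' j) = ∑' j : ℕ, a ^ (k * j) * p j) := by
  have hr : Antitone (succRatio p) :=
    antitone_succRatio hp fun j => by simpa using hlc (j + 1) j.succ_pos
  obtain ⟨C, hC, hCp⟩ := exists_pos_mul_inv_pow_le_of_tendsto hp hr hent hβ hlim ha
  have ha1 : 1 < a := (Real.one_lt_exp_iff.2 (by positivity)).trans ha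
  obtain ⟨u, hu, hup, hmom⟩ := exists_zero_moments_abs_le ha1 hC hCp
  have hpa (k : ℕ) : Summable fun j => p j * (a ^ k) ^ j := hent _ (by positivity)
  exact ⟨⟨C, hC, hCp⟩, exists_perturbation_of_zero_moments hp hu hup hmom,
    exists_ne_with_same_moments hpsum hpa hu hup hmom⟩
end

section
/- Let X ~ Heine(λ) with parameter 0 < q < 1, λ > 0, and let 1 < a < 1/q. Then p_j = o(a^{-j(j-1)/2}) as j → ∞; hence no perturbation exists for the distribution of Y = a^X. -/
/-!
Since `q a < 1`, the bound `p_j ≤ N λ^j q^(j choose 2)` (with `N` the normalising constant) gives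
`p_j a^(j choose 2) ≤ N λ^j (q a)^(j choose 2) → 0`.

For the moment problem put `c_j = p_j h_j`, so `|c_j| ≤ K λ^j q^(j choose 2)`. Vanishing of all
moments `∑_j (a^j)^k c_j` gives `∑_j P(a^j) c_j = 0` for every polynomial `P`; for
`P = ∏_{i<m} (X - a^i)` the terms `j < m` drop out and `c_m` is balanced against the tail `j > m`.
As `∏_{i<m} (a^m - a^i) ≥ C a^(m²)` while the tail weights are at most `a^(jm)`, a bound
`|c_j| ≤ K μ^j q^(j choose 2)` improves to `|c_j| ≤ K β (q a μ)^j q^(j choose 2)`. Iterating,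
`|c_m| ≤ K λ^m q^(m choose 2) (β (q a)^m)^n` for all `n`, so `c_m = 0` once `β (q a)^m < 1`, and
downward induction on the same relations kills the finitely many remaining coefficients.
-/

open Filter Finset Polynomial Topology

theorem Nat.choose_two_add (m n : ℕ) : (m + n).choose 2 = m.choose 2 + m * n + n.choose 2 := by
  induction n with
  | zero => simp
  | succ n ih =>
    rw [← add_assoc, Nat.choose_succ_succ', Nat.choose_succ_succ' n, ih, Nat.choose_one_right,
      Nat.choose_one_right]
    ring

theorem summable_pow_mul_pow_choose_two {r : ℝ} (hr0 : 0 ≤ r) (hr1 : r < 1) (b : ℝ) :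
    Summable fun j : ℕ => b ^ j * r ^ j.choose 2 := by
  refine summable_of_ratio_norm_eventually_le (r := 1 / 2) (by norm_num) ?_
  have hlim : Tendsto (fun n : ℕ => |b| * r ^ n) atTop (𝓝 0) := by
    simpa using (tendsto_pow_atTop_nhds_zero_of_lt_one hr0 hr1).const_mul |b|
  filter_upwards [hlim.eventually_le_const (by norm_num : (0 : ℝ) < 1 / 2)] with n hn
  have hsucc : b ^ (n + 1) * r ^ (n + 1).choose 2 = (b * r ^ n) * (b ^ n * r ^ n.choose 2) := by
    rw [Nat.choose_two_add]; simp only [Nat.choose_two_right]; ring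
  rw [hsucc, norm_mul, Real.norm_eq_abs (b * r ^ n), abs_mul,
    abs_of_nonneg (pow_nonneg hr0 n)]
  exact mul_le_mul_of_nonneg_right hn (norm_nonneg _)

theorem isLittleO_pow_mul_pow_choose_two {q a : ℝ} (hq : 0 ≤ q) (ha : 0 < a) (hqa : q * a < 1)
    (b : ℝ) :
    (fun j : ℕ => b ^ j * q ^ j.choose 2) =o[atTop] fun j : ℕ => (a ^ j.choose 2)⁻¹ := by
  rw [Asymptotics.isLittleO_iff_tendsto fun j hj => absurd hj (by positivity)]
  have hlim := (summable_pow_mul_pow_choose_two (by positivity) hqa b).tendsto_atTop_zero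
  refine hlim.congr fun j => ?_
  rw [div_inv_eq_mul, mul_pow]
  ring

theorem tprod_one_add_pos {ι : Type*} {f : ι → ℝ} (hf0 : ∀ i, 0 ≤ f i) (hf : Summable f) :
    0 < ∏' i, (1 + f i) := by
  rw [← Real.rexp_tsum_eq_tprod (fun i => by linarith [hf0 i])
    (Real.summable_log_one_add_of_summable hf)]
  exact Real.exp_pos _

theorem pow_one_sub_le_prod_range_one_sub_pow {q : ℝ} (hq0 : 0 ≤ q) (hq1 : q ≤ 1) (j : ℕ) :
    (1 - q) ^ j ≤ ∏ s ∈ range j, (1 - q ^ (s + 1)) := by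
  calc (1 - q) ^ j = ∏ _s ∈ range j, (1 - q) := by simp
    _ ≤ ∏ s ∈ range j, (1 - q ^ (s + 1)) := by
        refine prod_le_prod (fun _ _ => by linarith) fun s _ => ?_
        linarith [(pow_le_of_le_one hq0 hq1 s.succ_ne_zero : q ^ (s + 1) ≤ q)]

/-- Bernoulli's inequality `(1 - b) ^ b ^ d ≤ 1 - b ^ (d + 1)` turns the product into a power of
`1 - b` whose exponent is a partial geometric sum. -/
theorem rpow_inv_le_prod_range_one_sub_pow {b : ℝ} (hb0 : 0 ≤ b) (hb1 : b < 1) (m : ℕ) :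
    (1 - b) ^ (1 - b)⁻¹ ≤ ∏ d ∈ range m, (1 - b ^ (d + 1)) := by
  have hb : 0 < 1 - b := by linarith
  have hbern : ∀ d : ℕ, (1 - b) ^ (b ^ d : ℝ) ≤ 1 - b ^ (d + 1) := fun d => by
    have := rpow_one_add_le_one_add_mul_self (s := -b) (p := b ^ d) (by linarith)
      (by positivity) (pow_le_one₀ hb0 hb1.le)
    rw [← sub_eq_add_neg, mul_neg, ← sub_eq_add_neg] at this
    rwa [pow_succ]
  have hgeom : ∑ d ∈ range m, b ^ d ≤ (1 - b)⁻¹ := by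
    rw [← tsum_geometric_of_lt_one hb0 hb1]
    exact (summable_geometric_of_lt_one hb0 hb1).sum_le_tsum _ fun d _ => by positivity
  calc (1 - b) ^ (1 - b)⁻¹ ≤ (1 - b) ^ ∑ d ∈ range m, b ^ d :=
        Real.rpow_le_rpow_of_exponent_ge hb (by linarith) hgeom
    _ = ∏ d ∈ range m, (1 - b) ^ (b ^ d : ℝ) := Real.rpow_sum_of_pos hb _ _
    _ ≤ ∏ d ∈ range m, (1 - b ^ (d + 1)) :=
        prod_le_prod (fun d _ => by positivity) fun d _ => hbern d

theorem mul_pow_le_prod_range_pow_sub_pow {a : ℝ} (ha : 1 < a) (m : ℕ) :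
    (1 - a⁻¹) ^ (1 - a⁻¹)⁻¹ * a ^ (m * m) ≤ ∏ i ∈ range m, (a ^ m - a ^ i) := by
  have ha0 : 0 < a := by linarith
  have hfactor : ∀ i ∈ range m, a ^ m - a ^ i = a ^ m * (1 - a⁻¹ ^ (m - i)) := fun i hi => by
    rw [mul_sub, mul_one, inv_pow, ← pow_sub₀ a ha0.ne' (Nat.sub_le m i),
      Nat.sub_sub_self (mem_range.1 hi).le]
  have hreflect :
      ∏ d ∈ range m, (1 - a⁻¹ ^ (d + 1)) = ∏ i ∈ range m, (1 - a⁻¹ ^ (m - i)) := by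
    rw [← prod_range_reflect (fun d => 1 - a⁻¹ ^ (d + 1)) m]
    exact prod_congr rfl fun i hi => by rw [show m - 1 - i + 1 = m - i by grind]
  rw [prod_congr rfl hfactor, prod_mul_distrib, prod_const, card_range, ← pow_mul, ← hreflect,
    mul_comm]
  exact mul_le_mul_of_nonneg_left
    (rpow_inv_le_prod_range_one_sub_pow (by positivity) (inv_lt_one_of_one_lt₀ ha) m)
    (by positivity)

theorem abs_prod_range_pow_sub_pow_le {a : ℝ} (ha : 1 ≤ a) {m j : ℕ} (hmj : m ≤ j) :
    |∏ i ∈ range m, (a ^ j - a ^ i)| ≤ a ^ (j * m) := by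
  rw [abs_prod, pow_mul]
  calc ∏ i ∈ range m, |a ^ j - a ^ i| ≤ ∏ _i ∈ range m, a ^ j := by
        refine prod_le_prod (fun _ _ => abs_nonneg _) fun i hi => ?_
        have hij : a ^ i ≤ a ^ j := pow_le_pow_right₀ ha ((mem_range.1 hi).le.trans hmj)
        rw [abs_of_nonneg (sub_nonneg.2 hij)]
        linarith [pow_nonneg (zero_le_one.trans ha) i]
    _ = (a ^ j) ^ m := by rw [prod_const, card_range]

theorem hasSum_eval_mul_of_moments {ι : Type*} {x c : ι → ℝ}
    (hs : ∀ k : ℕ, Summable fun j => x j ^ k * c j) (h0 : ∀ k : ℕ, ∑' j, x j ^ k * c j = 0)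
    (P : ℝ[X]) : HasSum (fun j => P.eval (x j) * c j) 0 := by
  have hterm : ∀ k, HasSum (fun j => P.coeff k * (x j ^ k * c j)) 0 := fun k => by
    simpa [h0 k] using (hs k).hasSum.mul_left (P.coeff k)
  simpa [eval_eq_sum_range, sum_mul, mul_assoc] using hasSum_sum fun k _ => hterm k

section MomentProblem

variable {a q lam : ℝ} {c : ℕ → ℝ}

theorem pow_mul_pow_choose_two_shift_le (ha : 0 ≤ a) (hq : 0 ≤ q) (hqa : q * a ≤ 1) {μ : ℝ}
    (hμ0 : 0 ≤ μ) (hμ : μ ≤ lam) (m d : ℕ) :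
    a ^ ((d + 1 + m) * m) * (μ ^ (d + 1 + m) * q ^ (d + 1 + m).choose 2) ≤
      a ^ (m * m) * ((q * a * μ) ^ m * q ^ m.choose 2) *
        (lam ^ (d + 1) * q ^ (d + 1).choose 2) := by
  have hqa0 : 0 ≤ q * a := mul_nonneg hq ha
  have hX : 0 ≤ a ^ (m * m) * ((q * a * μ) ^ m * q ^ m.choose 2) := by
    have := mul_nonneg hqa0 hμ0; positivity
  have hsplit : a ^ ((d + 1 + m) * m) * (μ ^ (d + 1 + m) * q ^ (d + 1 + m).choose 2) =
      a ^ (m * m) * ((q * a * μ) ^ m * q ^ m.choose 2) * (μ ^ (d + 1) * q ^ (d + 1).choose 2) *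
        ((q * a) ^ m) ^ d := by
    rw [add_comm (d + 1) m, Nat.choose_two_add]
    ring
  rw [hsplit]
  calc _ ≤ a ^ (m * m) * ((q * a * μ) ^ m * q ^ m.choose 2) *
        (μ ^ (d + 1) * q ^ (d + 1).choose 2) :=
        mul_le_of_le_one_right (by positivity)
          (pow_le_one₀ (by positivity) (pow_le_one₀ hqa0 hqa))
    _ ≤ _ := by gcongr

theorem hasSum_tail_of_hasSum_prod {m : ℕ}
    (hc : HasSum (fun j => (∏ i ∈ range m, (a ^ j - a ^ i)) * c j) 0) :
    HasSum (fun d => (∏ i ∈ range m, (a ^ (d + 1 + m) - a ^ i)) * c (d + 1 + m))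
      (-((∏ i ∈ range m, (a ^ m - a ^ i)) * c m)) := by
  have hhead : ∑ j ∈ range m, (∏ i ∈ range m, (a ^ j - a ^ i)) * c j = 0 :=
    sum_eq_zero fun j hj => mul_eq_zero_of_left (prod_eq_zero hj (sub_self _)) _
  have := (hasSum_nat_add_iff' 1).2 ((hasSum_nat_add_iff' m).2 hc)
  simpa only [hhead, sum_range_one, zero_add, zero_sub, neg_zero] using this

theorem exists_abs_le_of_abs_le (ha : 1 < a) (hq : 0 ≤ q) (hqa : q * a < 1) (hlam : 0 ≤ lam)
    (hc : ∀ m, HasSum (fun j => (∏ i ∈ range m, (a ^ j - a ^ i)) * c j) 0) :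
    ∃ β ≥ 0, ∀ K μ : ℝ, 0 ≤ μ → μ ≤ lam → (∀ j, |c j| ≤ K * (μ ^ j * q ^ j.choose 2)) →
      ∀ m, |c m| ≤ K * β * ((q * a * μ) ^ m * q ^ m.choose 2) := by
  have ha0 : 0 < a := by linarith
  have hq1 : q < 1 := by nlinarith
  obtain ⟨S, hS⟩ : ∃ S, HasSum (fun d : ℕ => lam ^ (d + 1) * q ^ (d + 1).choose 2) S :=
    (summable_nat_add_iff 1).2 (summable_pow_mul_pow_choose_two hq hq1 lam)
  set C₀ := (1 - a⁻¹) ^ (1 - a⁻¹)⁻¹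
  have hC₀ : 0 < C₀ := Real.rpow_pos_of_pos (sub_pos.2 (inv_lt_one_of_one_lt₀ ha)) _
  refine ⟨S / C₀, div_nonneg (hS.nonneg fun d => by positivity) hC₀.le,
    fun K μ hμ0 hμ hK m => ?_⟩
  have hK0 : 0 ≤ K := by simpa using (abs_nonneg _).trans (hK 0)
  set w : ℕ → ℝ := fun j => (∏ i ∈ range m, (a ^ j - a ^ i)) * c j
  have htail : HasSum (fun d => w (d + 1 + m)) (-w m) := hasSum_tail_of_hasSum_prod (hc m)
  have hterm : ∀ d : ℕ, ‖w (d + 1 + m)‖ ≤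
      K * a ^ (m * m) * ((q * a * μ) ^ m * q ^ m.choose 2) *
        (lam ^ (d + 1) * q ^ (d + 1).choose 2) := fun d => by
    rw [Real.norm_eq_abs, abs_mul]
    calc _ ≤ a ^ ((d + 1 + m) * m) * (K * (μ ^ (d + 1 + m) * q ^ (d + 1 + m).choose 2)) :=
          mul_le_mul (abs_prod_range_pow_sub_pow_le ha.le (by omega)) (hK _) (abs_nonneg _)
            (by positivity)
      _ = K * (a ^ ((d + 1 + m) * m) * (μ ^ (d + 1 + m) * q ^ (d + 1 + m).choose 2)) := by ring
      _ ≤ K * (a ^ (m * m) * ((q * a * μ) ^ m * q ^ m.choose 2) *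
            (lam ^ (d + 1) * q ^ (d + 1).choose 2)) :=
          mul_le_mul_of_nonneg_left
            (pow_mul_pow_choose_two_shift_le ha0.le hq hqa.le hμ0 hμ m d) hK0
      _ = _ := by ring
  have hupper := htail.norm_le_of_bounded (hS.mul_left _) hterm
  have hlower : C₀ * a ^ (m * m) * |c m| ≤ ‖-w m‖ := by
    rw [norm_neg, Real.norm_eq_abs, abs_mul]
    exact mul_le_mul_of_nonneg_right
      ((mul_pow_le_prod_range_pow_sub_pow ha m).trans (le_abs_self _)) (abs_nonneg _)
  have hpos : 0 < C₀ * a ^ (m * m) := by positivity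
  rw [← mul_le_mul_iff_of_pos_left hpos]
  calc _ ≤ _ := hlower.trans hupper
    _ = _ := by field_simp

theorem abs_le_of_abs_le_iterate (hqa0 : 0 ≤ q * a) (hqa : q * a ≤ 1) (hlam : 0 ≤ lam) {β : ℝ}
    (hstep : ∀ K μ : ℝ, 0 ≤ μ → μ ≤ lam → (∀ j, |c j| ≤ K * (μ ^ j * q ^ j.choose 2)) →
      ∀ m, |c m| ≤ K * β * ((q * a * μ) ^ m * q ^ m.choose 2))
    {K : ℝ} (hK : ∀ j, |c j| ≤ K * (lam ^ j * q ^ j.choose 2)) (n : ℕ) (j : ℕ) :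
    |c j| ≤ K * β ^ n * (((q * a) ^ n * lam) ^ j * q ^ j.choose 2) := by
  induction n generalizing j with
  | zero => simpa using hK j
  | succ n ih =>
    have hμ : (q * a) ^ n * lam ≤ lam := mul_le_of_le_one_left hlam (pow_le_one₀ hqa0 hqa)
    convert hstep _ _ (by positivity) hμ ih j using 2 <;> ring

theorem eventually_eq_zero_of_abs_le (hqa0 : 0 ≤ q * a) (hqa : q * a < 1) {β K : ℝ} (hβ : 0 ≤ β)
    (hc : ∀ n j, |c j| ≤ K * β ^ n * (((q * a) ^ n * lam) ^ j * q ^ j.choose 2)) :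
    ∀ᶠ m in atTop, c m = 0 := by
  have hlim : Tendsto (fun m : ℕ => β * (q * a) ^ m) atTop (𝓝 0) := by
    simpa using (tendsto_pow_atTop_nhds_zero_of_lt_one hqa0 hqa).const_mul β
  filter_upwards [hlim.eventually_lt_const one_pos] with m hm
  have hr : Tendsto (fun n : ℕ => K * (lam ^ m * q ^ m.choose 2) * (β * (q * a) ^ m) ^ n) atTop
      (𝓝 0) := by
    simpa using (tendsto_pow_atTop_nhds_zero_of_lt_one (mul_nonneg hβ (pow_nonneg hqa0 m))
      hm).const_mul (K * (lam ^ m * q ^ m.choose 2))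
  refine abs_nonpos_iff.1 (ge_of_tendsto' hr fun n => (hc n m).trans_eq ?_)
  ring

theorem eq_zero_of_eventually_eq_zero (ha : 1 < a)
    (hc : ∀ m, HasSum (fun j => (∏ i ∈ range m, (a ^ j - a ^ i)) * c j) 0)
    (hev : ∀ᶠ m in atTop, c m = 0) : c = 0 := by
  obtain ⟨N, hN⟩ := eventually_atTop.1 hev
  have hstep : ∀ m, (∀ j, m < j → c j = 0) → c m = 0 := fun m hm => by
    have hsingle := hasSum_single (f := fun j => (∏ i ∈ range m, (a ^ j - a ^ i)) * c j) m
      fun j hj => (lt_or_gt_of_ne hj).elim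
        (fun hjm => mul_eq_zero_of_left (prod_eq_zero (mem_range.2 hjm) (sub_self _)) _)
        (fun hjm => by rw [hm j hjm, mul_zero])
    have hpos : 0 < ∏ i ∈ range m, (a ^ m - a ^ i) :=
      prod_pos fun i hi => sub_pos.2 (pow_lt_pow_right₀ ha (mem_range.1 hi))
    exact (mul_eq_zero.1 ((hc m).unique hsingle).symm).resolve_left hpos.ne'
  have hdown : ∀ n j, N - n ≤ j → c j = 0 := fun n => by
    induction n with
    | zero => exact hN
    | succ n ih => exact fun j hj => hstep j fun i hi => ih i (by omega)
  exact funext fun j => hdown N j (by omega)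

theorem eq_zero_of_moments_eq_zero (ha : 1 < a) (hq : 0 ≤ q) (hqa : q * a < 1) (hlam : 0 ≤ lam)
    {K : ℝ} (hK : ∀ j, |c j| ≤ K * (lam ^ j * q ^ j.choose 2))
    (hmom : ∀ k : ℕ, ∑' j, (a ^ j) ^ k * c j = 0) : c = 0 := by
  have ha0 : 0 < a := by linarith
  have hq1 : q < 1 := by nlinarith
  have hqa0 : 0 ≤ q * a := mul_nonneg hq ha0.le
  have hs : ∀ k : ℕ, Summable fun j => (a ^ j) ^ k * c j := fun k =>
    ((summable_pow_mul_pow_choose_two hq hq1 (a ^ k * lam)).mul_left K).of_norm_bounded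
      fun j => by
        rw [Real.norm_eq_abs, abs_mul, abs_of_nonneg (by positivity)]
        calc _ ≤ (a ^ j) ^ k * (K * (lam ^ j * q ^ j.choose 2)) :=
              mul_le_mul_of_nonneg_left (hK j) (by positivity)
          _ = _ := by ring
  have hc : ∀ m, HasSum (fun j => (∏ i ∈ range m, (a ^ j - a ^ i)) * c j) 0 := fun m => by
    have := hasSum_eval_mul_of_moments hs hmom (∏ i ∈ range m, (X - C (a ^ i)))
    simp only [eval_prod, eval_sub, eval_X, eval_C] at this
    exact this
  obtain ⟨β, hβ, hstep⟩ := exists_abs_le_of_abs_le ha hq hqa hlam hc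
  exact eq_zero_of_eventually_eq_zero ha hc (eventually_eq_zero_of_abs_le hqa0 hqa hβ
    (abs_le_of_abs_le_iterate hqa0 hqa.le hlam hstep hK))

end MomentProblem

theorem heine_term_pos {q lam N : ℝ} (hq0 : 0 < q) (hq1 : q < 1) (hlam : 0 < lam) (hN : 0 < N)
    (j : ℕ) :
    0 < N * q ^ j.choose 2 * (lam * (1 - q)) ^ j / ∏ s ∈ range j, (1 - q ^ (s + 1)) := by
  have hq : 0 < 1 - q := sub_pos.2 hq1
  exact div_pos (by positivity)
    (prod_pos fun s _ => sub_pos.2 (pow_lt_one₀ hq0.le hq1 s.succ_ne_zero))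

theorem heine_term_le {q lam N : ℝ} (hq0 : 0 ≤ q) (hq1 : q < 1) (hlam : 0 ≤ lam) (hN : 0 ≤ N)
    (j : ℕ) :
    N * q ^ j.choose 2 * (lam * (1 - q)) ^ j / ∏ s ∈ range j, (1 - q ^ (s + 1)) ≤
      N * (lam ^ j * q ^ j.choose 2) := by
  have hprod : 0 < ∏ s ∈ range j, (1 - q ^ (s + 1)) :=
    prod_pos fun s _ => sub_pos.2 (pow_lt_one₀ hq0 hq1 s.succ_ne_zero)
  rw [div_le_iff₀ hprod, mul_pow]
  calc N * q ^ j.choose 2 * (lam ^ j * (1 - q) ^ j) =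
        N * (lam ^ j * q ^ j.choose 2) * (1 - q) ^ j := by ring
    _ ≤ _ := mul_le_mul_of_nonneg_left (pow_one_sub_le_prod_range_one_sub_pow hq0 hq1.le j)
        (by positivity)

/-- Log-Heine, `1 < a < 1/q`: the Heine probabilities satisfy `p_j = o(a^{-j(j-1)/2})`;
hence no perturbation exists for the law of `Y = a^X`. -/
theorem log_heine_no_stieltjes (q lam a : ℝ) (hq0 : 0 < q) (hq1 : q < 1)
    (hlam : 0 < lam) (ha1 : 1 < a) (ha2 : a < 1 / q)
    (p : ℕ → ℝ)
    (hpdef : ∀ j : ℕ, p j = (∏' s : ℕ, (1 + lam * (1 - q) * q ^ s))⁻¹ *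
      q ^ (j * (j - 1) / 2) * (lam * (1 - q)) ^ j /
        ∏ s ∈ Finset.range j, (1 - q ^ (s + 1))) :
    ((fun j : ℕ => p j) =o[atTop] fun j : ℕ => (a ^ (j * (j - 1) / 2))⁻¹) ∧
    ¬ ∃ h : ℕ → ℝ, h ≠ 0 ∧ (∃ M : ℝ, ∀ j, |h j| ≤ M) ∧
        ∀ k : ℕ, (∑' j : ℕ, a ^ (k * j) * p j * h j) = 0 := by
  have hqa : q * a < 1 := by rwa [lt_div_iff₀ hq0, mul_comm] at ha2
  set N := (∏' s : ℕ, (1 + lam * (1 - q) * q ^ s))⁻¹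
  have hN : 0 < N := inv_pos.2 <| tprod_one_add_pos
    (fun s => mul_nonneg (mul_nonneg hlam.le (sub_nonneg.2 hq1.le)) (pow_nonneg hq0.le s))
    ((summable_geometric_of_lt_one hq0.le hq1).mul_left _)
  simp only [← Nat.choose_two_right] at hpdef ⊢
  have hp0 : ∀ j, 0 < p j := fun j => hpdef j ▸ heine_term_pos hq0 hq1 hlam hN j
  have hp : ∀ j, p j ≤ N * (lam ^ j * q ^ j.choose 2) := fun j =>
    hpdef j ▸ heine_term_le hq0.le hq1 hlam.le hN.le j
  refine ⟨?_, ?_⟩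
  · refine (Asymptotics.IsBigO.of_bound N (Eventually.of_forall fun j => ?_)).trans_isLittleO
      (isLittleO_pow_mul_pow_choose_two hq0.le (by linarith) hqa lam)
    rw [Real.norm_of_nonneg (hp0 j).le, Real.norm_of_nonneg (by positivity)]
    exact hp j
  · rintro ⟨h, hne, ⟨M, hM⟩, hmom⟩
    have hbound : ∀ j, |p j * h j| ≤ N * M * (lam ^ j * q ^ j.choose 2) := fun j => by
      rw [abs_mul, abs_of_pos (hp0 j)]
      calc _ ≤ N * (lam ^ j * q ^ j.choose 2) * M :=
            mul_le_mul (hp j) (hM j) (abs_nonneg _) (by positivity)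
        _ = _ := by ring
    have hc : (fun j => p j * h j) = 0 :=
      eq_zero_of_moments_eq_zero ha1 hq0.le hqa hlam.le hbound
        fun k => by simpa only [pow_mul', mul_assoc] using hmom k
    exact hne (funext fun j => (mul_eq_zero.1 (congr_fun hc j)).resolve_left (hp0 j).ne')
end
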